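/- arXiv:1706.04139 — 4 statements merged into one kernel-verified Lean document; each statement's English description precedes it below -/
import Mathlib

section
/- Let d ≥ 1 and let B be a bounded subset of ℓ₀. Then B is relatively compact in ℓ₀ if and only if the following holds: for every sequence (φⁿ)_{n∈ℕ} in B and every sequence (s_n)_{n∈ℕ} of integers with lim_{n→∞} |s_n| = ∞ such that the shifted sequences 𝒮^{s_n} φⁿ converge pointwise (i.e. (φⁿ_{t+s_n})_{n} converges for every t ∈ ℤ) to a bounded sequence ψ : ℤ → ℝ^d, one has ψ = 0. -/
open Filter Topology Bornology

noncomputable section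

/-- `ℓ₀`: the Banach space of sequences `ℤ → ℝ^d` with two-sided limit `0`,
equipped with the supremum norm. -/
abbrev lZero (d : ℕ) := ZeroAtInftyContinuousMap ℤ (EuclideanSpace ℝ (Fin d))

variable {d : ℕ}

lemma norm_apply_le (φ : lZero d) (u : ℤ) : ‖φ u‖ ≤ ‖φ‖ := by
  rw [← ZeroAtInftyContinuousMap.norm_toBCF_eq_norm]
  exact BoundedContinuousFunction.norm_coe_le_norm φ.toBCF u

lemma vanish_exists (φ : lZero d) {ε : ℝ} (hε : 0 < ε) :
    ∃ T : ℤ, ∀ u : ℤ, T ≤ |u| → ‖φ u‖ ≤ ε := by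
  have h := φ.zero_at_infty'
  rw [cocompact_eq_atBot_atTop, tendsto_sup] at h
  have h1 := (NormedAddCommGroup.tendsto_nhds_zero.mp h.1) ε hε
  have h2 := (NormedAddCommGroup.tendsto_nhds_zero.mp h.2) ε hε
  obtain ⟨a, ha⟩ := eventually_atBot.mp h1
  obtain ⟨b, hb⟩ := eventually_atTop.mp h2
  refine ⟨max |a| |b|, fun u hu => ?_⟩
  rcases le_or_gt 0 u with h0 | h0
  · refine (hb u ?_).le
    rw [abs_of_nonneg h0] at hu
    exact le_trans (le_abs_self b) (le_trans (le_max_right _ _) hu)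
  · refine (ha u ?_).le
    rw [abs_of_neg h0] at hu
    have := le_trans (neg_le_abs a) (le_trans (le_max_left _ _) hu)
    linarith

lemma mk_vanish (ψ : ℤ → EuclideanSpace ℝ (Fin d))
    (h : ∀ ε : ℝ, 0 < ε → ∃ T : ℤ, ∀ u : ℤ, T ≤ |u| → ‖ψ u‖ ≤ ε) :
    Tendsto ψ (cocompact ℤ) (𝓝 0) := by
  rw [cocompact_eq_atBot_atTop, tendsto_sup]
  constructor
  · rw [NormedAddCommGroup.tendsto_nhds_zero]
    intro ε hε
    obtain ⟨T, hT⟩ := h (ε/2) (by linarith)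
    refine eventually_atBot.mpr ⟨-(max T 0), fun u hu => ?_⟩
    refine lt_of_le_of_lt (hT u ?_) (by linarith)
    have h0 : u < 0 ∨ u ≤ 0 := Or.inr (by omega)
    rw [abs_of_nonpos (by omega)]
    omega
  · rw [NormedAddCommGroup.tendsto_nhds_zero]
    intro ε hε
    obtain ⟨T, hT⟩ := h (ε/2) (by linarith)
    refine eventually_atTop.mpr ⟨max T 0, fun u hu => ?_⟩
    refine lt_of_le_of_lt (hT u ?_) (by linarith)
    rw [abs_of_nonneg (by omega)]
    omega

lemma extract (M : ℝ) (f : ℕ → ℤ → EuclideanSpace ℝ (Fin d))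
    (hf : ∀ n t, ‖f n t‖ ≤ M) :
    ∃ g : ℕ → ℕ, StrictMono g ∧ ∃ ψ : ℤ → EuclideanSpace ℝ (Fin d),
      (∀ t, ‖ψ t‖ ≤ M) ∧
      ∀ t, Tendsto (fun n => f (g n) t) atTop (𝓝 (ψ t)) := by
  have hK : IsCompact (Set.pi Set.univ fun _ : ℤ =>
      Metric.closedBall (0 : EuclideanSpace ℝ (Fin d)) M) :=
    isCompact_univ_pi fun _ => isCompact_closedBall 0 M
  have hmem : ∀ n, f n ∈ Set.pi Set.univ fun _ : ℤ =>
      Metric.closedBall (0 : EuclideanSpace ℝ (Fin d)) M := by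
    intro n t _
    simpa [mem_closedBall_zero_iff] using hf n t
  obtain ⟨ψ, hψmem, g, hg, hconv⟩ := hK.isSeqCompact hmem
  refine ⟨g, hg, ψ, fun t => ?_, fun t => ?_⟩
  · have := hψmem t (Set.mem_univ t)
    simpa [mem_closedBall_zero_iff] using this
  · exact (tendsto_pi_nhds.mp hconv) t

lemma dist_le_of_forall {f g : lZero d} {C : ℝ} (hC : 0 ≤ C)
    (h : ∀ u : ℤ, dist (f u) (g u) ≤ C) : dist f g ≤ C := by
  have : dist f g = dist f.toBCF g.toBCF :=
    (ZeroAtInftyContinuousMap.isometry_toBCF.dist_eq f g).symm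
  rw [this]
  exact (BoundedContinuousFunction.dist_le hC).mpr fun u => h u

lemma compact_of_vanish {B : Set (lZero d)} (M : ℝ)
    (hM : ∀ φ ∈ B, ‖φ‖ ≤ M)
    (V : ∀ ε : ℝ, 0 < ε → ∃ T : ℤ, ∀ φ ∈ B, ∀ u : ℤ, T ≤ |u| → ‖φ u‖ ≤ ε) :
    IsCompact (closure B) := by
  refine IsSeqCompact.isCompact ?_
  intro x hx
  -- pick approximants in B
  have hy : ∀ n : ℕ, ∃ y ∈ B, dist (x n) y < 1 / (n + 1) := fun n =>
    Metric.mem_closure_iff.mp (hx n) _ (by positivity)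
  choose y hyB hyd using hy
  have hyb : ∀ n t, ‖y n t‖ ≤ M := fun n t =>
    le_trans (norm_apply_le _ _) (hM _ (hyB n))
  obtain ⟨g, hg, ψ, hψb, hconv⟩ := extract M (fun n => (y n : ℤ → _)) hyb
  -- ψ vanishes at infinity, with quantitative bound
  have hψv : ∀ ε : ℝ, 0 < ε → ∃ T : ℤ, ∀ u : ℤ, T ≤ |u| → ‖ψ u‖ ≤ ε := by
    intro ε hε
    obtain ⟨T, hT⟩ := V ε hε
    refine ⟨T, fun u hu => ?_⟩
    exact le_of_tendsto' ((continuous_norm.tendsto _).comp (hconv u))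
      fun n => hT _ (hyB (g n)) u hu
  set Ψ : lZero d := ⟨⟨ψ, continuous_of_discreteTopology⟩, mk_vanish ψ hψv⟩ with hΨ
  have hΨapp : ∀ u : ℤ, Ψ u = ψ u := fun u => rfl
  -- uniform convergence of y ∘ g to Ψ
  have hyt : Tendsto (fun n => y (g n)) atTop (𝓝 Ψ) := by
    rw [Metric.tendsto_atTop]
    intro ε hε
    obtain ⟨T, hT⟩ := V (ε/4) (by linarith)
    obtain ⟨T', hT'⟩ := hψv (ε/4) (by linarith)
    set T'' := max T T' with hT''
    have hS : Set.Finite {u : ℤ | |u| < T''} := by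
      apply Set.Finite.subset (Set.finite_Icc (-T'') T'')
      intro u hu
      simp only [Set.mem_setOf_eq, abs_lt] at hu
      simp only [Set.mem_Icc]
      exact ⟨hu.1.le, hu.2.le⟩
    have hptw : ∀ᶠ n in atTop, ∀ u ∈ {u : ℤ | |u| < T''},
        dist (y (g n) u) (ψ u) < ε / 2 := by
      refine (eventually_all_finite hS).mpr fun u _ => ?_
      exact Metric.tendsto_nhds.mp (hconv u) (ε/2) (by linarith)
    obtain ⟨N, hN⟩ := eventually_atTop.mp hptw
    refine ⟨N, fun n hn => ?_⟩
    have hd : dist (y (g n)) Ψ ≤ ε / 2 := by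
      refine dist_le_of_forall (by linarith) fun u => ?_
      rcases lt_or_ge |u| T'' with h | h
      · exact (hN n hn u h).le
      · rw [hΨapp, dist_eq_norm]
        calc ‖y (g n) u - ψ u‖ ≤ ‖y (g n) u‖ + ‖ψ u‖ := norm_sub_le _ _
          _ ≤ ε/4 + ε/4 := add_le_add
              (hT _ (hyB (g n)) u (le_trans (le_max_left _ _) h))
              (hT' u (le_trans (le_max_right _ _) h))
          _ = ε/2 := by ring
    linarith
  -- x ∘ g also converges to Ψ
  have hxt : Tendsto (x ∘ g) atTop (𝓝 Ψ) := by
    refine hyt.congr_dist ?_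
    refine squeeze_zero (fun n => dist_nonneg) (fun n => ?_)
      tendsto_one_div_add_atTop_nhds_zero_nat
    rw [dist_comm]
    refine le_trans (hyd (g n)).le ?_
    have hng : n ≤ g n := hg.le_apply
    have : (n : ℝ) + 1 ≤ (g n : ℝ) + 1 := by
      have := (Nat.cast_le (α := ℝ)).mpr hng
      linarith
    apply one_div_le_one_div_of_le (by positivity) this
  refine ⟨Ψ, ?_, g, hg, hxt⟩
  exact mem_closure_of_tendsto hyt (Eventually.of_forall fun n => hyB (g n))

lemma vanish_of_compact {B : Set (lZero d)} (hc : IsCompact (closure B)) :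
    ∀ ε : ℝ, 0 < ε → ∃ T : ℤ, ∀ φ ∈ B, ∀ u : ℤ, T ≤ |u| → ‖φ u‖ ≤ ε := by
  intro ε hε
  have htb : TotallyBounded B := hc.totallyBounded.subset subset_closure
  obtain ⟨t, ht, hcov⟩ := Metric.totallyBounded_iff.mp htb (ε/2) (by linarith)
  have hv : ∀ y : lZero d, ∃ T : ℤ, ∀ u : ℤ, T ≤ |u| → ‖y u‖ ≤ ε/2 :=
    fun y => vanish_exists y (by linarith)
  choose Tf hTf using hv
  refine ⟨(ht.toFinset.sup fun y => (Tf y).toNat : ℕ), fun φ hφ u hu => ?_⟩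
  obtain ⟨y, hyt, hyφ⟩ := Set.mem_iUnion₂.mp (hcov hφ)
  have h1 : Tf y ≤ |u| := by
    refine le_trans (Int.self_le_toNat _) (le_trans ?_ hu)
    exact_mod_cast Finset.le_sup (f := fun y => (Tf y).toNat) (ht.mem_toFinset.mpr hyt)
  have h2 : ‖φ u - y u‖ ≤ dist φ y := by
    rw [dist_eq_norm]
    simpa using norm_apply_le (φ - y) u
  calc ‖φ u‖ = ‖(φ u - y u) + y u‖ := by rw [sub_add_cancel]
    _ ≤ ‖φ u - y u‖ + ‖y u‖ := norm_add_le _ _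
    _ ≤ ε/2 + ε/2 := add_le_add (le_trans h2 (Metric.mem_ball.mp hyφ).le)
        (hTf y u h1)
    _ = ε := by ring


/-- A bounded subset `B ⊆ ℓ₀` is relatively compact if and only if every
pointwise limit `ψ` (bounded) of shifted sequences `𝒮^{s_n} φⁿ`, with
`φⁿ ∈ B` and `|s_n| → ∞`, vanishes identically. -/
theorem stmt_1 (d : ℕ) (hd : 1 ≤ d) (B : Set (lZero d)) (hB : IsBounded B) :
    IsCompact (closure B) ↔
      ∀ φ : ℕ → lZero d, (∀ n, φ n ∈ B) →
      ∀ s : ℕ → ℤ, Tendsto (fun n => |s n|) atTop atTop →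
      ∀ ψ : ℤ → EuclideanSpace ℝ (Fin d), (∃ M : ℝ, ∀ t : ℤ, ‖ψ t‖ ≤ M) →
        (∀ t : ℤ, Tendsto (fun n => (φ n) (t + s n)) atTop (nhds (ψ t))) →
        ψ = 0 := by
  constructor
  · intro hc φ hφ s hs ψ _ hconv
    funext t
    have key : ∀ ε : ℝ, 0 < ε → ‖ψ t‖ ≤ ε := by
      intro ε hε
      obtain ⟨T, hT⟩ := vanish_of_compact hc ε hε
      have hev : ∀ᶠ n in atTop, ‖(φ n) (t + s n)‖ ≤ ε := by
        have h1 : ∀ᶠ n in atTop, T + |t| ≤ |s n| := hs.eventually_ge_atTop _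
        refine h1.mono fun n hn => ?_
        refine hT _ (hφ n) _ ?_
        have := abs_sub_abs_le_abs_sub (s n) (-t)
        simp only [abs_neg, sub_neg_eq_add] at this
        have h2 : |t + s n| = |s n + t| := by rw [add_comm]
        omega
      exact le_of_tendsto ((continuous_norm.tendsto _).comp (hconv t)) hev
    have h0 : ‖ψ t‖ ≤ 0 := le_of_forall_pos_le_add (by simpa using key)
    simpa using norm_le_zero_iff.mp h0
  · intro H
    obtain ⟨M, hM⟩ := isBounded_iff_forall_norm_le.mp hB
    refine compact_of_vanish M hM ?_
    by_contra hV
    push_neg at hV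
    obtain ⟨ε, hε, hbad⟩ := hV
    have hsel : ∀ n : ℕ, ∃ φ ∈ B, ∃ u : ℤ, (n : ℤ) ≤ |u| ∧ ε < ‖φ u‖ :=
      fun n => hbad n
    choose φ hφB u hu hεu using hsel
    have hf : ∀ n t, ‖(φ n) (t + u n)‖ ≤ M := fun n t =>
      le_trans (norm_apply_le _ _) (hM _ (hφB n))
    obtain ⟨g, hg, ψ, hψb, hconv⟩ :=
      extract M (fun n t => (φ n) (t + u n)) hf
    have hψ0 : ψ = 0 := by
      refine H (fun n => φ (g n)) (fun n => hφB (g n)) (fun n => u (g n)) ?_ ψ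
        ⟨M, hψb⟩ hconv
      refine tendsto_atTop_mono (fun n => ?_) tendsto_natCast_atTop_atTop
      exact le_trans (Nat.cast_le.mpr hg.le_apply) (hu (g n))
    have h1 : Tendsto (fun n => ‖(φ (g n)) (0 + u (g n))‖) atTop (𝓝 ‖ψ 0‖) :=
      (continuous_norm.tendsto _).comp (hconv 0)
    have h2 : ε ≤ ‖ψ 0‖ := by
      refine ge_of_tendsto h1 (Eventually.of_forall fun n => ?_)
      simpa [zero_add] using (hεu (g n)).le
    rw [hψ0] at h2
    simp at h2
    linarith
end
end

section
/- Let d ≥ 1 and let A, B : ℤ → L(ℝ^d) be bounded sequences of linear maps with lim_{t→±∞} |A_t − B_t| = 0 in operator norm. Define bounded linear operators 𝓛_A, 𝓛_B : ℓ₀ → ℓ₀ by (𝓛_A φ)_t := φ_t − A_{t−1} φ_{t−1} and (𝓛_B φ)_t := φ_t − B_{t−1} φ_{t−1}. Then 𝓛_A is a Fredholm operator of index 0 if and only if 𝓛_B is a Fredholm operator of index 0. -/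
open Filter Topology Bornology

noncomputable section

/-- A bounded linear operator between Banach spaces is Fredholm of index `0` if its
kernel is finite-dimensional, its range is closed and of finite codimension, and
`dim ker T = codim ran T`. -/
def IsFredholmIdxZero {X Y : Type*} [NormedAddCommGroup X] [NormedSpace ℝ X]
    [NormedAddCommGroup Y] [NormedSpace ℝ Y] (T : X →L[ℝ] Y) : Prop :=
  FiniteDimensional ℝ (LinearMap.ker (T : X →ₗ[ℝ] Y)) ∧
  IsClosed (LinearMap.range (T : X →ₗ[ℝ] Y) : Set Y) ∧
  FiniteDimensional ℝ (Y ⧸ LinearMap.range (T : X →ₗ[ℝ] Y)) ∧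
  Module.finrank ℝ (LinearMap.ker (T : X →ₗ[ℝ] Y)) = Module.finrank ℝ (Y ⧸ LinearMap.range (T : X →ₗ[ℝ] Y))

namespace Stmt4Aux

section Abstract

variable {X : Type*} [NormedAddCommGroup X] [NormedSpace ℝ X] [CompleteSpace X]

/-- `T` decomposes as an invertible operator plus a finite-rank operator. -/
def Fred0' (T : X →L[ℝ] X) : Prop :=
  ∃ (S : X ≃L[ℝ] X) (F : X →L[ℝ] X),
    FiniteDimensional ℝ (LinearMap.range (F : X →ₗ[ℝ] X)) ∧ T = ↑S + F

/-- A subspace containing a closed subspace of finite codimension is closed. -/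
theorem isClosed_of_le_of_findim_quot (C W : Submodule ℝ X)
    (hC : IsClosed (C : Set X)) (hCW : C ≤ W)
    (hfd : FiniteDimensional ℝ (X ⧸ C)) : IsClosed (W : Set X) := by
  haveI : IsClosed (C : Set X) := hC
  haveI := hfd
  have hW : (W : Set X) = (fun x => Submodule.Quotient.mk (p := C) x) ⁻¹'
      ((W.map C.mkQ : Submodule ℝ (X ⧸ C)) : Set (X ⧸ C)) := by
    ext x
    simp only [Set.mem_preimage, SetLike.mem_coe, Submodule.mem_map, Submodule.mkQ_apply]
    constructor
    · exact fun hx => ⟨x, hx, rfl⟩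
    · rintro ⟨y, hy, hxy⟩
      have hsub : y - x ∈ C := (Submodule.Quotient.eq C).mp hxy
      have : x = y - (y - x) := by abel
      rw [this]
      exact W.sub_mem hy (hCW hsub)
  rw [hW]
  exact (Submodule.closed_of_finiteDimensional (W.map C.mkQ)).preimage continuous_quot_mk

/-- `id + finite rank` is Fredholm of index zero. -/
theorem isFredholmIdxZero_one_add (F₀ : X →L[ℝ] X)
    (hF₀ : FiniteDimensional ℝ (LinearMap.range (F₀ : X →ₗ[ℝ] X))) :
    IsFredholmIdxZero (ContinuousLinearMap.id ℝ X + F₀) := by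
  haveI := hF₀
  set G : X →L[ℝ] X := ContinuousLinearMap.id ℝ X + F₀ with hGdef
  have hGapply : ∀ x, G x = x + F₀ x := fun x => rfl
  set V : Submodule ℝ X := LinearMap.range (F₀ : X →ₗ[ℝ] X) with hV
  have hmemV : ∀ x, F₀ x ∈ V := fun x => LinearMap.mem_range_self _ x
  -- the kernel of G is contained in V
  have hkerG : ∀ x, x ∈ LinearMap.ker (G : X →ₗ[ℝ] X) ↔ x + F₀ x = 0 := by
    intro x; rw [LinearMap.mem_ker, ContinuousLinearMap.coe_coe, hGapply]
  have hkerle : LinearMap.ker (G : X →ₗ[ℝ] X) ≤ V := by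
    intro x hx
    have hx' : x = -(F₀ x) := eq_neg_of_add_eq_zero_left ((hkerG x).mp hx)
    rw [hx']; exact V.neg_mem (hmemV x)
  haveI hfinker : FiniteDimensional ℝ (LinearMap.ker (G : X →ₗ[ℝ] X)) :=
    Submodule.finiteDimensional_of_le hkerle
  -- G maps V to V
  have hGV : ∀ x ∈ V, (G : X →ₗ[ℝ] X) x ∈ V := by
    intro x hx
    have : (G : X →ₗ[ℝ] X) x = x + F₀ x := rfl
    rw [this]; exact V.add_mem hx (hmemV x)
  set G' : V →ₗ[ℝ] V := (G : X →ₗ[ℝ] X).restrict hGV with hG'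
  -- kernel of G equals kernel of G' (up to equiv)
  have hkerV : LinearMap.ker (G : X →ₗ[ℝ] X) = LinearMap.ker (G : X →ₗ[ℝ] X) := rfl
  have hker_eq : LinearMap.ker G' = (LinearMap.ker (G : X →ₗ[ℝ] X)).comap V.subtype := by
    rw [hG', LinearMap.ker_restrict hGV]
  have eker : (LinearMap.ker G' : Type _) ≃ₗ[ℝ] LinearMap.ker (G : X →ₗ[ℝ] X) := by
    rw [hker_eq]
    exact Submodule.comapSubtypeEquivOfLe hkerle
  -- the quotient map restricted to V
  set ψ : V →ₗ[ℝ] (X ⧸ LinearMap.range (G : X →ₗ[ℝ] X)) :=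
    (LinearMap.range (G : X →ₗ[ℝ] X)).mkQ.comp V.subtype with hψ
  have hψapply : ∀ v : V, ψ v = Submodule.Quotient.mk (v : X) := fun v => rfl
  have hψsurj : Function.Surjective ψ := by
    intro y
    obtain ⟨x, rfl⟩ := Submodule.Quotient.mk_surjective _ y
    refine ⟨⟨-(F₀ x), V.neg_mem (hmemV x)⟩, ?_⟩
    rw [hψapply]
    have : (⟨-(F₀ x), V.neg_mem (hmemV x)⟩ : V).1 - x = -(G x) := by
      rw [hGapply]; abel
    rw [Submodule.Quotient.eq, this]
    exact (LinearMap.range (G : X →ₗ[ℝ] X)).neg_mem (LinearMap.mem_range_self _ x)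
  have hkerψ : LinearMap.ker ψ = (LinearMap.range (G : X →ₗ[ℝ] X)).comap V.subtype := by
    rw [hψ, LinearMap.ker_comp, Submodule.ker_mkQ]
  have hrangeG' : LinearMap.range G' = (LinearMap.range (G : X →ₗ[ℝ] X)).comap V.subtype := by
    apply le_antisymm
    · rintro v ⟨w, rfl⟩
      simp only [Submodule.mem_comap]
      exact ⟨(w : X), rfl⟩
    · rintro ⟨v, hv⟩ hmem
      simp only [Submodule.mem_comap, Submodule.coe_subtype, LinearMap.mem_range] at hmem
      obtain ⟨x, hx⟩ := hmem
      have hxV : x ∈ V := by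
        have : x = v - F₀ x := by
          rw [← hx, ContinuousLinearMap.coe_coe, hGapply]; abel
        rw [this]; exact V.sub_mem hv (hmemV x)
      exact ⟨⟨x, hxV⟩, Subtype.ext hx⟩
  -- finrank bookkeeping
  have e2 : (V ⧸ LinearMap.ker ψ) ≃ₗ[ℝ] (X ⧸ LinearMap.range (G : X →ₗ[ℝ] X)) :=
    LinearMap.quotKerEquivOfSurjective ψ hψsurj
  haveI : FiniteDimensional ℝ (X ⧸ LinearMap.range (G : X →ₗ[ℝ] X)) := Module.Finite.equiv e2
  have hrank1 : Module.finrank ℝ (LinearMap.ker (G : X →ₗ[ℝ] X)) = Module.finrank ℝ (LinearMap.ker G') :=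
    eker.symm.finrank_eq
  have hrank2 : Module.finrank ℝ (X ⧸ LinearMap.range (G : X →ₗ[ℝ] X))
      = Module.finrank ℝ (V ⧸ LinearMap.ker ψ) := e2.symm.finrank_eq
  have hrank3 : Module.finrank ℝ (LinearMap.ker ψ) = Module.finrank ℝ (LinearMap.range G') := by
    rw [hkerψ, ← hrangeG']
  have hadd1 : Module.finrank ℝ (V ⧸ LinearMap.ker ψ) + Module.finrank ℝ (LinearMap.ker ψ)
      = Module.finrank ℝ V := Submodule.finrank_quotient_add_finrank _
  have hadd2 : Module.finrank ℝ (LinearMap.range G') + Module.finrank ℝ (LinearMap.ker G')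
      = Module.finrank ℝ V := LinearMap.finrank_range_add_finrank_ker G'
  -- closedness of the range
  have hclosed : IsClosed ((LinearMap.range (G : X →ₗ[ℝ] X) : Submodule ℝ X) : Set X) := by
    have hkerF : IsClosed ((LinearMap.ker (F₀ : X →ₗ[ℝ] X) : Submodule ℝ X) : Set X) := ContinuousLinearMap.isClosed_ker F₀
    haveI : FiniteDimensional ℝ (LinearMap.range (F₀ : X →ₗ[ℝ] X)) := hF₀
    haveI hquot : FiniteDimensional ℝ (X ⧸ LinearMap.ker (F₀ : X →ₗ[ℝ] X)) :=
      Module.Finite.equiv (LinearMap.quotKerEquivRange (F₀ : X →ₗ[ℝ] X)).symm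
    have hle : LinearMap.ker (F₀ : X →ₗ[ℝ] X) ≤ LinearMap.range (G : X →ₗ[ℝ] X) := by
      intro x hx
      refine ⟨x, ?_⟩
      rw [ContinuousLinearMap.coe_coe, hGapply, ← ContinuousLinearMap.coe_coe F₀, LinearMap.mem_ker.mp hx, add_zero]
    exact isClosed_of_le_of_findim_quot _ _ hkerF hle hquot
  refine ⟨hfinker, hclosed, inferInstance, ?_⟩
  omega

theorem isFredholmIdxZero_of_fred0' {T : X →L[ℝ] X} (h : Fred0' T) :
    IsFredholmIdxZero T := by
  obtain ⟨S, F, hF, hT⟩ := h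
  set F₀ : X →L[ℝ] X := S.symm.toContinuousLinearMap.comp F with hF₀def
  have hF₀fin : FiniteDimensional ℝ (LinearMap.range (F₀ : X →ₗ[ℝ] X)) := by
    haveI := hF
    have : LinearMap.range (F₀ : X →ₗ[ℝ] X)
        = (LinearMap.range (F : X →ₗ[ℝ] X)).map (S.symm : X →ₗ[ℝ] X) := by
      apply le_antisymm
      · rintro _ ⟨x, rfl⟩
        exact ⟨F x, LinearMap.mem_range_self _ x, rfl⟩
      · rintro _ ⟨y, ⟨x, rfl⟩, rfl⟩
        exact ⟨x, rfl⟩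
    rw [this]
    infer_instance
  set G : X →L[ℝ] X := ContinuousLinearMap.id ℝ X + F₀ with hGdef
  have hG := isFredholmIdxZero_one_add F₀ hF₀fin
  have hTG : ∀ x, T x = S (G x) := by
    intro x
    have : G x = x + S.symm (F x) := rfl
    rw [this, map_add, S.apply_symm_apply, hT]
    rfl
  -- kernels agree
  have hker : LinearMap.ker (T : X →ₗ[ℝ] X) = LinearMap.ker (G : X →ₗ[ℝ] X) := by
    ext x
    simp only [LinearMap.mem_ker, ContinuousLinearMap.coe_coe]
    rw [hTG x]
    constructor
    · intro hx
      have := congrArg S.symm hx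
      simpa using this
    · intro hx; rw [hx]; simp
  -- ranges are related by `S`
  have hrange : LinearMap.range (T : X →ₗ[ℝ] X) = (LinearMap.range (G : X →ₗ[ℝ] X)).map (S : X →ₗ[ℝ] X) := by
    apply le_antisymm
    · rintro _ ⟨x, rfl⟩
      exact ⟨G x, LinearMap.mem_range_self _ x, (hTG x).symm⟩
    · rintro _ ⟨y, ⟨x, rfl⟩, rfl⟩
      exact ⟨x, (hTG x)⟩
  obtain ⟨h1, h2, h3, h4⟩ := hG
  refine ⟨by rw [hker]; exact h1, ?_, ?_, ?_⟩
  · have : (LinearMap.range (T : X →ₗ[ℝ] X) : Set X) = S '' (LinearMap.range (G : X →ₗ[ℝ] X) : Set X) := by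
      rw [hrange]
      rfl
    rw [this]
    exact (S.toHomeomorph.isClosedMap) _ h2
  · haveI := h3
    have e : (X ⧸ LinearMap.range (G : X →ₗ[ℝ] X)) ≃ₗ[ℝ] (X ⧸ LinearMap.range (T : X →ₗ[ℝ] X)) :=
      Submodule.Quotient.equiv _ _ S.toLinearEquiv (by rw [hrange])
    exact Module.Finite.equiv e
  · haveI := h3
    have e : (X ⧸ LinearMap.range (G : X →ₗ[ℝ] X)) ≃ₗ[ℝ] (X ⧸ LinearMap.range (T : X →ₗ[ℝ] X)) :=
      Submodule.Quotient.equiv _ _ S.toLinearEquiv (by rw [hrange])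
    rw [hker, h4]
    exact e.finrank_eq

theorem fred0'_of_isFredholmIdxZero {T : X →L[ℝ] X} (h : IsFredholmIdxZero T) :
    Fred0' T := by
  obtain ⟨hker, hclosed, hcoker, hrank⟩ := h
  haveI := hker
  haveI := hcoker
  obtain ⟨proj, hproj⟩ :=
    Submodule.ClosedComplemented.of_finiteDimensional (LinearMap.ker (T : X →ₗ[ℝ] X))
  obtain ⟨W, hW⟩ := Submodule.exists_isCompl (LinearMap.range (T : X →ₗ[ℝ] X))
  haveI : FiniteDimensional ℝ W :=
    Module.Finite.equiv ((LinearMap.range (T : X →ₗ[ℝ] X)).quotientEquivOfIsCompl W hW)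
  have hfr : Module.finrank ℝ (LinearMap.ker (T : X →ₗ[ℝ] X)) = Module.finrank ℝ W :=
    hrank.trans ((LinearMap.range (T : X →ₗ[ℝ] X)).quotientEquivOfIsCompl W hW).finrank_eq
  set J : (LinearMap.ker (T : X →ₗ[ℝ] X)) ≃ₗ[ℝ] W := LinearEquiv.ofFinrankEq _ _ hfr with hJ
  set Fc : X →L[ℝ] X :=
    (LinearMap.toContinuousLinearMap (W.subtype.comp (J : (LinearMap.ker (T : X →ₗ[ℝ] X)) →ₗ[ℝ] W))).comp
      proj with hFc
  have hFcapply : ∀ x, Fc x = ((J (proj x) : W) : X) := fun x => rfl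
  -- S = T + Fc
  set S : X →L[ℝ] X := T + Fc with hS
  have hSapply : ∀ x, S x = T x + ((J (proj x) : W) : X) := fun x => rfl
  have hprojmem : ∀ x (hx : x ∈ LinearMap.ker (T : X →ₗ[ℝ] X)), proj x = ⟨x, hx⟩ := by
    intro x hx
    exact hproj ⟨x, hx⟩
  have hdisj : ∀ a b : X, a ∈ LinearMap.range (T : X →ₗ[ℝ] X) → b ∈ W → a + b = 0 → a = 0 ∧ b = 0 := by
    intro a b ha hb hab
    have hamem : a ∈ LinearMap.range (T : X →ₗ[ℝ] X) ⊓ W := by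
      constructor
      · exact ha
      · have : a = -b := eq_neg_of_add_eq_zero_left hab
        rw [this]; exact W.neg_mem hb
    rw [hW.inf_eq_bot] at hamem
    have ha0 : a = 0 := hamem
    refine ⟨ha0, ?_⟩
    rw [ha0, zero_add] at hab
    exact hab
  have hkerS : LinearMap.ker (S : X →ₗ[ℝ] X) = ⊥ := by
    rw [LinearMap.ker_eq_bot']
    intro x hx
    rw [ContinuousLinearMap.coe_coe, hSapply] at hx
    obtain ⟨h1, h2⟩ := hdisj _ _ (LinearMap.mem_range_self _ x) (J (proj x)).2 hx
    have hxker : x ∈ LinearMap.ker (T : X →ₗ[ℝ] X) := LinearMap.mem_ker.mpr h1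
    have hJ0 : J (proj x) = 0 := Subtype.ext h2
    have hproj0 : proj x = 0 := J.injective (by rw [hJ0, map_zero])
    rw [hprojmem x hxker] at hproj0
    exact congrArg Subtype.val hproj0
  have hrangeS : LinearMap.range (S : X →ₗ[ℝ] X) = ⊤ := by
    rw [LinearMap.range_eq_top]
    intro y
    have hy : y ∈ LinearMap.range (T : X →ₗ[ℝ] X) ⊔ W := by rw [hW.sup_eq_top]; trivial
    obtain ⟨t, ht, w, hw, rfl⟩ := Submodule.mem_sup.mp hy
    obtain ⟨x, rfl⟩ := ht
    obtain ⟨k, hk⟩ := J.surjective ⟨w, hw⟩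
    refine ⟨x - ((proj x : LinearMap.ker (T : X →ₗ[ℝ] X)) : X) + ((k : LinearMap.ker (T : X →ₗ[ℝ] X)) : X), ?_⟩
    have hTeq : T (x - ((proj x : LinearMap.ker (T : X →ₗ[ℝ] X)) : X) + ((k : LinearMap.ker (T : X →ₗ[ℝ] X)) : X)) = T x := by
      rw [map_add, map_sub]
      have h1 : T ((proj x : LinearMap.ker (T : X →ₗ[ℝ] X)) : X) = 0 := (proj x).2
      have h2 : T ((k : LinearMap.ker (T : X →ₗ[ℝ] X)) : X) = 0 := k.2
      rw [h1, h2, sub_zero, add_zero]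
    have hprojeq : proj (x - ((proj x : LinearMap.ker (T : X →ₗ[ℝ] X)) : X) + ((k : LinearMap.ker (T : X →ₗ[ℝ] X)) : X)) = k := by
      rw [map_add, map_sub, hproj (proj x), hproj k, sub_self, zero_add]
    rw [ContinuousLinearMap.coe_coe, ContinuousLinearMap.coe_coe, hSapply, hTeq, hprojeq, hk]
  set Se : X ≃L[ℝ] X := ContinuousLinearEquiv.ofBijective S hkerS hrangeS with hSe
  refine ⟨Se, -Fc, ?_, ?_⟩
  · have : LinearMap.range ((-Fc : X →L[ℝ] X) : X →ₗ[ℝ] X) = LinearMap.range (Fc : X →ₗ[ℝ] X) := by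
      apply le_antisymm
      · rintro _ ⟨x, rfl⟩
        have : (-Fc) x = Fc (-x) := by simp
        rw [ContinuousLinearMap.coe_coe, this]; exact LinearMap.mem_range_self _ _
      · rintro _ ⟨x, rfl⟩
        have : Fc x = (-Fc) (-x) := by simp
        rw [ContinuousLinearMap.coe_coe, this]; exact LinearMap.mem_range_self _ _
    rw [this]
    have hle : LinearMap.range (Fc : X →ₗ[ℝ] X) ≤ W := by
      rintro _ ⟨x, rfl⟩
      rw [ContinuousLinearMap.coe_coe, hFcapply]
      exact (J (proj x)).2
    exact Submodule.finiteDimensional_of_le hle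
  · have hcoe : (Se : X →L[ℝ] X) = S := rfl
    rw [hcoe, hS]
    abel

theorem fred0'_add (hX : Nontrivial X) {T K : X →L[ℝ] X} (hT : Fred0' T)
    (happrox : ∀ ε > 0, ∃ F : X →L[ℝ] X,
      FiniteDimensional ℝ (LinearMap.range (F : X →ₗ[ℝ] X)) ∧ ‖K - F‖ < ε) :
    Fred0' (T + K) := by
  obtain ⟨S, F, hF, hTdef⟩ := hT
  set u : (X →L[ℝ] X)ˣ :=
    { val := (S : X →L[ℝ] X)
      inv := (S.symm : X →L[ℝ] X)
      val_inv := by ext x; simp [ContinuousLinearMap.mul_apply]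
      inv_val := by ext x; simp [ContinuousLinearMap.mul_apply] } with hu
  have hinv : (↑u⁻¹ : X →L[ℝ] X) = (S.symm : X →L[ℝ] X) := rfl
  have hinvpos : (0 : ℝ) < ‖(↑u⁻¹ : X →L[ℝ] X)‖ := by
    rw [hinv, norm_pos_iff]
    intro h0
    obtain ⟨x, hx⟩ := exists_ne (0 : X)
    apply hx
    have h1 : S.symm (S x) = 0 := by
      have := congrFun (congrArg DFunLike.coe h0) (S x)
      simpa using this
    rwa [S.symm_apply_apply] at h1
  obtain ⟨F', hF', hKF'⟩ := happrox (‖(↑u⁻¹ : X →L[ℝ] X)‖⁻¹) (inv_pos.mpr hinvpos)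
  set u' : (X →L[ℝ] X)ˣ := u.add (K - F') hKF' with hu'
  have hu'val : (↑u' : X →L[ℝ] X) = (S : X →L[ℝ] X) + (K - F') := rfl
  set Se : X ≃L[ℝ] X := ContinuousLinearEquiv.equivOfInverse (↑u') (↑u'⁻¹)
    (fun x => by
      rw [← ContinuousLinearMap.mul_apply, u'.inv_mul, ContinuousLinearMap.one_apply])
    (fun x => by
      rw [← ContinuousLinearMap.mul_apply, u'.mul_inv, ContinuousLinearMap.one_apply]) with hSe
  refine ⟨Se, F + F', ?_, ?_⟩
  · have hle : LinearMap.range ((F + F' : X →L[ℝ] X) : X →ₗ[ℝ] X) ≤ LinearMap.range (F : X →ₗ[ℝ] X) ⊔ LinearMap.range (F' : X →ₗ[ℝ] X) := by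
      rintro _ ⟨x, rfl⟩
      have : (F + F') x = F x + F' x := rfl
      rw [ContinuousLinearMap.coe_coe, this]
      exact Submodule.add_mem_sup (LinearMap.mem_range_self _ x) (LinearMap.mem_range_self _ x)
    haveI := hF
    haveI := hF'
    exact Submodule.finiteDimensional_of_le hle
  · have hcoe : (Se : X →L[ℝ] X) = (S : X →L[ℝ] X) + (K - F') := rfl
    rw [hcoe, hTdef]
    abel

theorem isFredholmIdxZero_add (hX : Nontrivial X) {T K : X →L[ℝ] X}
    (hT : IsFredholmIdxZero T)
    (happrox : ∀ ε > 0, ∃ F : X →L[ℝ] X,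
      FiniteDimensional ℝ (LinearMap.range (F : X →ₗ[ℝ] X)) ∧ ‖K - F‖ < ε) :
    IsFredholmIdxZero (T + K) :=
  isFredholmIdxZero_of_fred0' (fred0'_add hX (fred0'_of_isFredholmIdxZero hT) happrox)

end Abstract

section Concrete

variable {d : ℕ}

/-- Build an element of `lZero d` from a finitely supported function. -/
def mkFin (f : ℤ → EuclideanSpace ℝ (Fin d)) (s : Finset ℤ) (hf : ∀ t ∉ s, f t = 0) :
    lZero d where
  toFun := f
  continuous_toFun := continuous_of_discreteTopology
  zero_at_infty' := by
    have hmem : {t : ℤ | f t = 0} ∈ Filter.cocompact ℤ :=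
      Filter.mem_cocompact.mpr
        ⟨(s : Set ℤ), s.finite_toSet.isCompact, fun t ht => hf t (by simpa using ht)⟩
    exact Filter.Tendsto.congr'
      (Filter.eventuallyEq_of_mem hmem (fun t ht => ht.symm)) tendsto_const_nhds

@[simp] theorem mkFin_apply (f : ℤ → EuclideanSpace ℝ (Fin d)) (s : Finset ℤ)
    (hf : ∀ t ∉ s, f t = 0) (t : ℤ) : mkFin f s hf t = f t := rfl

theorem lZero_norm_le (ψ : lZero d) {c : ℝ} (hc : 0 ≤ c) (h : ∀ t, ‖ψ t‖ ≤ c) :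
    ‖ψ‖ ≤ c := by
  rw [← ZeroAtInftyContinuousMap.norm_toBCF_eq_norm]
  exact (BoundedContinuousFunction.norm_le hc).mpr h

theorem lZero_apply_norm_le (ψ : lZero d) (t : ℤ) : ‖ψ t‖ ≤ ‖ψ‖ := by
  rw [← ZeroAtInftyContinuousMap.norm_toBCF_eq_norm]
  exact BoundedContinuousFunction.norm_coe_le_norm ψ.toBCF t

theorem lZero_nontrivial (hd : 1 ≤ d) : Nontrivial (lZero d) := by
  set v : EuclideanSpace ℝ (Fin d) := EuclideanSpace.single (⟨0, hd⟩ : Fin d) (1 : ℝ) with hv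
  have hvne : v ≠ 0 := by
    intro h0
    have := congrArg (fun w : EuclideanSpace ℝ (Fin d) => w (⟨0, hd⟩ : Fin d)) h0
    rw [hv] at this
    simp [EuclideanSpace.single_apply] at this
  refine ⟨⟨mkFin (fun t => if t = 0 then v else 0) {0}
    (fun t ht => if_neg (by simpa using ht)), 0, ?_⟩⟩
  intro h
  apply hvne
  have := congrFun (congrArg DFunLike.coe h) 0
  simpa using this

variable (D : ℤ → (EuclideanSpace ℝ (Fin d) →L[ℝ] EuclideanSpace ℝ (Fin d)))

/-- The truncated shifted multiplication operator. -/
def truncOp (s : Finset ℤ) : lZero d →L[ℝ] lZero d := by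
  have hsupp : ∀ (φ : lZero d) (t : ℤ), t ∉ s.image (· + 1) →
      (if t - 1 ∈ s then D (t - 1) (φ (t - 1)) else 0) = 0 := by
    intro φ t ht
    apply if_neg
    intro hmem
    exact ht (Finset.mem_image.mpr ⟨t - 1, hmem, by ring⟩)
  refine LinearMap.mkContinuous
    { toFun := fun φ => mkFin (fun t => if t - 1 ∈ s then D (t - 1) (φ (t - 1)) else 0)
        (s.image (· + 1)) (hsupp φ)
      map_add' := by
        intro φ χ
        ext t
        simp only [mkFin_apply, ZeroAtInftyContinuousMap.coe_add, Pi.add_apply]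
        split <;> simp
      map_smul' := by
        intro c φ
        ext t
        simp only [mkFin_apply, ZeroAtInftyContinuousMap.coe_smul, Pi.smul_apply,
          RingHom.id_apply]
        split <;> simp }
    (∑ r ∈ s, ‖D r‖) ?_
  intro φ
  have hM0 : (0 : ℝ) ≤ ∑ r ∈ s, ‖D r‖ := Finset.sum_nonneg fun r _ => norm_nonneg _
  apply lZero_norm_le _ (mul_nonneg hM0 (norm_nonneg φ))
  intro t
  simp only [LinearMap.coe_mk, AddHom.coe_mk, mkFin_apply]
  split
  · rename_i hmem
    calc ‖D (t - 1) (φ (t - 1))‖ ≤ ‖D (t - 1)‖ * ‖φ (t - 1)‖ :=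
          ContinuousLinearMap.le_opNorm _ _
      _ ≤ (∑ r ∈ s, ‖D r‖) * ‖φ‖ := by
          apply mul_le_mul _ (lZero_apply_norm_le φ _) (norm_nonneg _) hM0
          exact Finset.single_le_sum (fun r _ => norm_nonneg (D r)) hmem
  · rw [norm_zero]; exact mul_nonneg hM0 (norm_nonneg φ)

@[simp] theorem truncOp_apply (s : Finset ℤ) (φ : lZero d) (t : ℤ) :
    truncOp D s φ t = if t - 1 ∈ s then D (t - 1) (φ (t - 1)) else 0 := rfl

set_option synthInstance.maxHeartbeats 1000000 in
theorem truncOp_finiteRank (s : Finset ℤ) :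
    FiniteDimensional ℝ (LinearMap.range ((truncOp D s) : lZero d →ₗ[ℝ] lZero d)) := by
  set s' : Finset ℤ := s.image (· + 1) with hs'
  set V : Submodule ℝ (lZero d) :=
    { carrier := {ψ : lZero d | ∀ t ∉ s', ψ t = 0}
      add_mem' := by
        intro a b ha hb t ht
        have : (a + b) t = a t + b t := rfl
        rw [this, ha t ht, hb t ht, add_zero]
      zero_mem' := fun t _ => rfl
      smul_mem' := by
        intro c a ha t ht
        have : (c • a) t = c • a t := rfl
        rw [this, ha t ht, smul_zero] } with hV
  haveI hVfin : FiniteDimensional ℝ V := by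
    set ev : V →ₗ[ℝ] ({x : ℤ // x ∈ s'} → EuclideanSpace ℝ (Fin d)) :=
      { toFun := fun ψ => fun i => (ψ : lZero d) (i : ℤ)
        map_add' := fun a b => rfl
        map_smul' := fun c a => rfl } with hev
    haveI : FiniteDimensional ℝ ({x : ℤ // x ∈ s'} → EuclideanSpace ℝ (Fin d)) :=
      inferInstance
    refine FiniteDimensional.of_injective ev ?_
    intro a b hab
    apply Subtype.ext
    refine ZeroAtInftyContinuousMap.ext fun t => ?_
    by_cases ht : t ∈ s'
    · exact congrFun hab ⟨t, ht⟩
    · rw [a.2 t ht, b.2 t ht]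
  have hle : LinearMap.range ((truncOp D s) : lZero d →ₗ[ℝ] lZero d) ≤ V := by
    rintro _ ⟨φ, rfl⟩
    intro t ht
    rw [ContinuousLinearMap.coe_coe, truncOp_apply]
    apply if_neg
    intro hmem
    exact ht (Finset.mem_image.mpr ⟨t - 1, hmem, by ring⟩)
  exact Submodule.finiteDimensional_of_le hle

theorem approx_trunc
    (htop : Tendsto (fun t : ℤ => ‖D t‖) atTop (nhds 0))
    (hbot : Tendsto (fun t : ℤ => ‖D t‖) atBot (nhds 0))
    (K : lZero d →L[ℝ] lZero d)
    (hK : ∀ (φ : lZero d) (t : ℤ), K φ t = D (t - 1) (φ (t - 1))) :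
    ∀ ε > 0, ∃ F : lZero d →L[ℝ] lZero d,
      FiniteDimensional ℝ (LinearMap.range (F : lZero d →ₗ[ℝ] lZero d)) ∧ ‖K - F‖ < ε := by
  intro ε hε
  have hε2 : (0 : ℝ) < ε / 2 := half_pos hε
  obtain ⟨N₁, hN₁⟩ := Filter.eventually_atTop.mp (htop.eventually (gt_mem_nhds hε2))
  obtain ⟨N₂, hN₂⟩ := Filter.eventually_atBot.mp (hbot.eventually (gt_mem_nhds hε2))
  set s : Finset ℤ := Finset.Icc (min N₂ N₁) (max N₂ N₁) with hs
  have hsmall : ∀ t ∉ s, ‖D t‖ ≤ ε / 2 := by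
    intro t ht
    rw [hs, Finset.mem_Icc, not_and_or, not_le, not_le] at ht
    rcases ht with ht | ht
    · exact le_of_lt (hN₂ t (le_of_lt (lt_of_lt_of_le ht (min_le_left _ _))))
    · exact le_of_lt (hN₁ t (le_of_lt (lt_of_le_of_lt (le_max_right _ _) ht)))
  refine ⟨truncOp D s, truncOp_finiteRank D s, ?_⟩
  have hbound : ‖K - truncOp D s‖ ≤ ε / 2 := by
    apply ContinuousLinearMap.opNorm_le_bound _ (le_of_lt hε2)
    intro φ
    apply lZero_norm_le _ (mul_nonneg (le_of_lt hε2) (norm_nonneg φ))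
    intro t
    have happ : (K - truncOp D s) φ t = K φ t - truncOp D s φ t := rfl
    rw [happ, hK, truncOp_apply]
    split
    · simp [le_of_lt hε2, mul_nonneg (le_of_lt hε2) (norm_nonneg φ)]
    · rename_i hmem
      rw [sub_zero]
      calc ‖D (t - 1) (φ (t - 1))‖ ≤ ‖D (t - 1)‖ * ‖φ (t - 1)‖ :=
            ContinuousLinearMap.le_opNorm _ _
        _ ≤ (ε / 2) * ‖φ‖ :=
            mul_le_mul (hsmall _ hmem) (lZero_apply_norm_le φ _) (norm_nonneg _)
              (le_of_lt hε2)
  exact lt_of_le_of_lt hbound (half_lt_self hε)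

end Concrete

end Stmt4Aux

/-- If `A, B : ℤ → L(ℝ^d)` are bounded operator sequences with `‖A_t − B_t‖ → 0` as
`t → ±∞`, then `𝓛_A` is Fredholm of index `0` iff `𝓛_B` is, where
`(𝓛_A φ)_t = φ_t − A_{t−1} φ_{t−1}`. -/
theorem stmt_4 (d : ℕ) (hd : 1 ≤ d)
    (A B : ℤ → (EuclideanSpace ℝ (Fin d) →L[ℝ] EuclideanSpace ℝ (Fin d)))
    (hbdA : ∃ M : ℝ, ∀ t : ℤ, ‖A t‖ ≤ M) (hbdB : ∃ M : ℝ, ∀ t : ℤ, ‖B t‖ ≤ M)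
    (hlimTop : Tendsto (fun t : ℤ => ‖A t - B t‖) atTop (nhds 0))
    (hlimBot : Tendsto (fun t : ℤ => ‖A t - B t‖) atBot (nhds 0))
    (LA LB : lZero d →L[ℝ] lZero d)
    (hLA : ∀ φ : lZero d, ∀ t : ℤ, (LA φ) t = φ t - A (t - 1) (φ (t - 1)))
    (hLB : ∀ φ : lZero d, ∀ t : ℤ, (LB φ) t = φ t - B (t - 1) (φ (t - 1))) :
    IsFredholmIdxZero LA ↔ IsFredholmIdxZero LB := by
  haveI hnt : Nontrivial (lZero d) := Stmt4Aux.lZero_nontrivial hd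
  set D : ℤ → (EuclideanSpace ℝ (Fin d) →L[ℝ] EuclideanSpace ℝ (Fin d)) :=
    fun t => A t - B t with hD
  set K : lZero d →L[ℝ] lZero d := LB - LA with hKdef
  have hK : ∀ (φ : lZero d) (t : ℤ), K φ t = D (t - 1) (φ (t - 1)) := by
    intro φ t
    have h1 : K φ t = LB φ t - LA φ t := rfl
    have h2 : D (t - 1) (φ (t - 1)) = A (t - 1) (φ (t - 1)) - B (t - 1) (φ (t - 1)) := rfl
    rw [h1, hLA, hLB, h2]
    abel
  have happrox := Stmt4Aux.approx_trunc D hlimTop hlimBot K hK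
  have happroxneg : ∀ ε > 0, ∃ F : lZero d →L[ℝ] lZero d,
      FiniteDimensional ℝ (LinearMap.range (F : lZero d →ₗ[ℝ] lZero d)) ∧ ‖(-K) - F‖ < ε := by
    intro ε hε
    obtain ⟨F, hF, hKF⟩ := happrox ε hε
    refine ⟨-F, ?_, ?_⟩
    · have hrg : LinearMap.range ((-F : lZero d →L[ℝ] lZero d) : lZero d →ₗ[ℝ] lZero d) = LinearMap.range (F : lZero d →ₗ[ℝ] lZero d) := by
        apply le_antisymm
        · rintro _ ⟨x, rfl⟩
          exact ⟨-x, by simp⟩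
        · rintro _ ⟨x, rfl⟩
          exact ⟨-x, by simp⟩
      rw [hrg]; exact hF
    · have heq : (-K) - (-F) = F - K := by abel
      rw [heq]
      exact (norm_sub_rev F K).trans_lt hKF
  constructor
  · intro h
    have hres := Stmt4Aux.isFredholmIdxZero_add hnt h happrox
    rwa [show LA + K = LB by rw [hKdef]; abel] at hres
  · intro h
    have hres := Stmt4Aux.isFredholmIdxZero_add hnt h happroxneg
    rwa [show LB + -K = LA by rw [hKdef]; abel] at hres
end
end

section
/- Let d ≥ 1 and let f_t : ℝ^d → ℝ^d (t ∈ ℤ) be globally Lipschitz maps such that: (i) sup_{t∈ℤ} sup_{x∈B} |f_t(x)| < ∞ for every bounded B ⊂ ℝ^d; (ii) there exists n ∈ ℕ with sup_{t∈ℤ} ∏_{s=t}^{t+n−1} Lip(f_s) < 1, where Lip(f_s) denotes a (the least) Lipschitz constant of f_s. Then there exists exactly one bounded sequence φ : ℤ → ℝ^d satisfying φ_{t+1} = f_t(φ_t) for all t ∈ ℤ. -/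
open Filter Topology Bornology

noncomputable section

namespace Stmt15Aux

variable (d : ℕ) (f : ℤ → EuclideanSpace ℝ (Fin d) → EuclideanSpace ℝ (Fin d))

abbrev E := EuclideanSpace ℝ (Fin d)
abbrev BCF := BoundedContinuousFunction ℤ (E d)

/-- The shift-composition operator on bounded sequences. -/
noncomputable def Phi
    (hbd : ∀ B : Set (E d), IsBounded B → ∃ M : ℝ, ∀ t : ℤ, ∀ x ∈ B, ‖f t x‖ ≤ M)
    (x : BCF d) : BCF d :=
  BoundedContinuousFunction.ofNormedAddCommGroup (fun t => f (t - 1) (x (t - 1)))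
    continuous_of_discreteTopology
    (Classical.choose (hbd _ x.isBounded_range))
    (fun t => Classical.choose_spec (hbd _ x.isBounded_range) (t - 1) (x (t - 1)) ⟨t - 1, rfl⟩)

@[simp] lemma Phi_apply (hbd) (x : BCF d) (t : ℤ) :
    Phi d f hbd x t = f (t - 1) (x (t - 1)) := rfl

end Stmt15Aux

open Stmt15Aux

/-- Contractive equations: if the `f_t` are globally Lipschitz, uniformly bounded on
bounded sets, and some `n`-fold product of (least) Lipschitz constants is uniformly
smaller than `1`, then `x_{t+1} = f_t(x_t)` has exactly one bounded entire solution. -/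
theorem stmt_15 (d : ℕ) (hd : 1 ≤ d)
    (f : ℤ → EuclideanSpace ℝ (Fin d) → EuclideanSpace ℝ (Fin d))
    (L : ℤ → NNReal)
    -- `L t` is the least Lipschitz constant of `f t`
    (hLip : ∀ t : ℤ, LipschitzWith (L t) (f t))
    (hleast : ∀ t : ℤ, ∀ L' : NNReal, LipschitzWith L' (f t) → L t ≤ L')
    -- (i): uniform boundedness on bounded sets
    (hbd : ∀ B : Set (EuclideanSpace ℝ (Fin d)), IsBounded B →
      ∃ M : ℝ, ∀ t : ℤ, ∀ x ∈ B, ‖f t x‖ ≤ M)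
    -- (ii): `sup_t ∏_{s=t}^{t+n-1} Lip f_s < 1`
    (n : ℕ) (hn : 0 < n)
    (hcontr : ∃ c : ℝ, c < 1 ∧ ∀ t : ℤ,
      (∏ i ∈ Finset.range n, (L (t + (i : ℤ)) : ℝ)) ≤ c) :
    ∃! φ : ℤ → EuclideanSpace ℝ (Fin d),
      (∃ M : ℝ, ∀ t : ℤ, ‖φ t‖ ≤ M) ∧ ∀ t : ℤ, φ (t + 1) = f t (φ t) := by
  obtain ⟨c, hc1, hc⟩ := hcontr
  set Φ : BCF d → BCF d := Phi d f hbd with hΦ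
  -- pointwise estimate for iterates
  have key : ∀ k : ℕ, ∀ x y : BCF d, ∀ t : ℤ,
      dist (Φ^[k] x t) (Φ^[k] y t)
        ≤ (∏ i ∈ Finset.range k, (L (t - k + (i : ℤ)) : ℝ)) * dist (x (t - k)) (y (t - k)) := by
    intro k
    induction k with
    | zero => intro x y t; simp
    | succ k ih =>
      intro x y t
      have h1 : (Φ^[k + 1] x) t = f (t - 1) (Φ^[k] x (t - 1)) := by
        rw [Function.iterate_succ_apply']; rfl
      have h2 : (Φ^[k + 1] y) t = f (t - 1) (Φ^[k] y (t - 1)) := by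
        rw [Function.iterate_succ_apply']; rfl
      rw [h1, h2]
      have hL := (hLip (t - 1)).dist_le_mul (Φ^[k] x (t - 1)) (Φ^[k] y (t - 1))
      have hind := ih x y (t - 1)
      calc dist (f (t - 1) (Φ^[k] x (t - 1))) (f (t - 1) (Φ^[k] y (t - 1)))
          ≤ (L (t - 1) : ℝ) * dist (Φ^[k] x (t - 1)) (Φ^[k] y (t - 1)) := hL
        _ ≤ (L (t - 1) : ℝ) *
            ((∏ i ∈ Finset.range k, (L (t - 1 - k + (i : ℤ)) : ℝ)) *
              dist (x (t - 1 - k)) (y (t - 1 - k))) := by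
            exact mul_le_mul_of_nonneg_left hind (L (t - 1)).coe_nonneg
        _ = (∏ i ∈ Finset.range (k + 1), (L (t - (k + 1 : ℕ) + (i : ℤ)) : ℝ)) *
              dist (x (t - (k + 1 : ℕ))) (y (t - (k + 1 : ℕ))) := by
            rw [Finset.prod_range_succ]
            have e1 : ∀ i : ℕ, t - ((k : ℤ) + 1) + (i : ℤ) = t - 1 - k + i := by
              intro i; ring
            have e2 : t - ((k : ℤ) + 1) + (k : ℤ) = t - 1 := by ring
            push_cast
            simp only [e1, e2]
            have e3 : t - ((k : ℤ) + 1) = t - 1 - k := by ring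
            rw [e3]
            ring
  have hc0 : 0 ≤ c := by
    refine le_trans ?_ (hc 0)
    exact Finset.prod_nonneg fun i _ => (L _).coe_nonneg
  -- the n-th iterate is a contraction
  have hcontr' : ContractingWith ⟨c, hc0⟩ (Φ^[n]) := by
    constructor
    · exact_mod_cast hc1
    · refine LipschitzWith.of_dist_le_mul fun x y => ?_
      rw [BoundedContinuousFunction.dist_le (by positivity)]
      intro t
      calc dist (Φ^[n] x t) (Φ^[n] y t)
          ≤ (∏ i ∈ Finset.range n, (L (t - n + (i : ℤ)) : ℝ)) * dist (x (t - n)) (y (t - n)) :=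
            key n x y t
        _ ≤ c * dist x y := by
            apply mul_le_mul (hc (t - n)) (BoundedContinuousFunction.dist_coe_le_dist _)
              dist_nonneg hc0
  -- fixed point
  let x₀ : BCF d := hcontr'.fixedPoint (Φ^[n])
  have hx₀ : Function.IsFixedPt (Φ^[n]) x₀ := hcontr'.fixedPoint_isFixedPt
  have hΦx₀ : Φ x₀ = x₀ := by
    have : Function.IsFixedPt (Φ^[n]) (Φ x₀) := by
      show Φ^[n] (Φ x₀) = Φ x₀
      rw [← Function.iterate_succ_apply, Function.iterate_succ_apply', hx₀]
    exact (hcontr'.fixedPoint_unique this) ▸ (hcontr'.fixedPoint_unique hx₀) ▸ rfl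
  refine ⟨fun t => x₀ t, ⟨⟨‖x₀‖, fun t => x₀.norm_coe_le_norm t⟩, fun t => ?_⟩, ?_⟩
  · have h : (Φ x₀) (t + 1) = x₀ (t + 1) := by rw [hΦx₀]
    rw [hΦ, Phi_apply] at h
    simpa using h.symm
  · rintro ψ ⟨⟨M, hM⟩, hψ⟩
    set y : BCF d := BoundedContinuousFunction.ofNormedAddCommGroup ψ
      continuous_of_discreteTopology M hM with hy
    have hΦy : Φ y = y := by
      apply BoundedContinuousFunction.ext
      intro t
      show f (t - 1) (y (t - 1)) = y t
      have : ψ (t - 1 + 1) = f (t - 1) (ψ (t - 1)) := hψ (t - 1)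
      simp only [hy, BoundedContinuousFunction.coe_ofNormedAddCommGroup] at *
      rw [← this]
      congr 1
      ring
    have hfix : Function.IsFixedPt (Φ^[n]) y := (Function.IsFixedPt.iterate hΦy n)
    have : y = x₀ := hcontr'.fixedPoint_unique hfix
    funext t
    have := congrFun (congrArg (fun g : BCF d => (g : ℤ → E d)) this) t
    simpa [hy] using this
end
end

section
/- Let d ≥ 1, let A : ℤ → L(ℝ^d) be a sequence of linear maps such that the equation x_{t+1} = A_t x_t has an exponential dichotomy on ℤ with invariant projector (P_t) and constants K ≥ 1, α ∈ (0,1), and let r_t : ℝ^d → ℝ^d (t ∈ ℤ) be globally Lipschitz maps with sup_{t∈ℤ} sup_{x∈B} |r_t(x)| < ∞ for every bounded B ⊂ ℝ^d and L := sup_{t∈ℤ} Lip(r_t) satisfying L · K(1+α)/(1−α) < 1. Then there exists exactly one bounded sequence φ : ℤ → ℝ^d satisfying φ_{t+1} = A_t φ_t + r_t(φ_t) for all t ∈ ℤ. -/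
open Filter Topology Bornology

noncomputable section

/-- The `n`-fold evolution operator starting at time `s`: `A_{s+n-1} ∘ ⋯ ∘ A_s`. -/
def evol {d : ℕ} (A : ℤ → (EuclideanSpace ℝ (Fin d) →L[ℝ] EuclideanSpace ℝ (Fin d))) :
    ℕ → ℤ → (EuclideanSpace ℝ (Fin d) →L[ℝ] EuclideanSpace ℝ (Fin d))
  | 0, _ => 1
  | (n + 1), s => A (s + n) ∘L evol A n s

/-- The evolution operator `Φ_A(t,s) = A_{t−1} ⋯ A_s` for `s ≤ t` (and `1` if `t ≤ s`). -/
def Phi {d : ℕ} (A : ℤ → (EuclideanSpace ℝ (Fin d) →L[ℝ] EuclideanSpace ℝ (Fin d)))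
    (t s : ℤ) : EuclideanSpace ℝ (Fin d) →L[ℝ] EuclideanSpace ℝ (Fin d) :=
  evol A (t - s).toNat s

/-- The equation `x_{t+1} = A_t x_t` has an exponential dichotomy on the discrete
interval `I` with invariant projector `P` and constants `K ≥ 1`, `α ∈ (0,1)`. -/
def IsED {d : ℕ} (A P : ℤ → (EuclideanSpace ℝ (Fin d) →L[ℝ] EuclideanSpace ℝ (Fin d)))
    (I : Set ℤ) (K α : ℝ) : Prop :=
  1 ≤ K ∧ 0 < α ∧ α < 1 ∧
  (∀ t ∈ I, (P t) ∘L (P t) = P t) ∧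
  (∀ t : ℤ, t ∈ I → t + 1 ∈ I → (P (t + 1)) ∘L (A t) = (A t) ∘L (P t)) ∧
  (∀ t : ℤ, t ∈ I → t + 1 ∈ I →
    Set.BijOn (A t) (LinearMap.ker (P t : EuclideanSpace ℝ (Fin d) →ₗ[ℝ] EuclideanSpace ℝ (Fin d)) : Set (EuclideanSpace ℝ (Fin d)))
      (LinearMap.ker (P (t + 1) : EuclideanSpace ℝ (Fin d) →ₗ[ℝ] EuclideanSpace ℝ (Fin d)) : Set (EuclideanSpace ℝ (Fin d)))) ∧
  (∀ s ∈ I, ∀ t ∈ I, s ≤ t → ‖Phi A t s ∘L P s‖ ≤ K * α ^ (t - s).toNat) ∧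
  (∃ Ψ : ℤ → ℤ → (EuclideanSpace ℝ (Fin d) →L[ℝ] EuclideanSpace ℝ (Fin d)),
    ∀ s ∈ I, ∀ t ∈ I, s ≤ t →
      (∀ x, Ψ s t x ∈ LinearMap.ker (P s : EuclideanSpace ℝ (Fin d) →ₗ[ℝ] EuclideanSpace ℝ (Fin d))) ∧
      (Phi A t s ∘L Ψ s t = 1 - P t) ∧
      ‖Ψ s t‖ ≤ K * α ^ (t - s).toNat)

local notation "E" d => EuclideanSpace ℝ (Fin d)

namespace Stmt17

variable {d : ℕ} {A P : ℤ → ((E d) →L[ℝ] (E d))} {Ψ : ℤ → ℤ → ((E d) →L[ℝ] (E d))} {K α : ℝ}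

lemma evol_succ (A : ℤ → ((E d) →L[ℝ] (E d))) (n : ℕ) (s : ℤ) :
    evol A (n+1) s = A (s + n) ∘L evol A n s := rfl

lemma Phi_eq (A : ℤ → ((E d) →L[ℝ] (E d))) (s : ℤ) (n : ℕ) :
    Phi A (s + n) s = evol A n s := by unfold Phi; simp

lemma Phi_self (A : ℤ → ((E d) →L[ℝ] (E d))) (t : ℤ) : Phi A t t = 1 := by
  unfold Phi; simp; rfl

lemma Phi_succ (A : ℤ → ((E d) →L[ℝ] (E d))) {s t : ℤ} (h : s ≤ t) :
    Phi A (t+1) s = A t ∘L Phi A t s := by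
  obtain ⟨n, rfl⟩ : ∃ n : ℕ, t = s + n := ⟨(t - s).toNat, by omega⟩
  have h2 : s + (n:ℤ) + 1 = s + ((n+1 : ℕ) : ℤ) := by push_cast; ring
  rw [h2, Phi_eq, Phi_eq, evol_succ]

lemma evol_inv (hinv : ∀ t, P (t + 1) ∘L A t = A t ∘L P t) (n : ℕ) (s : ℤ) :
    P (s + n) ∘L evol A n s = evol A n s ∘L P s := by
  induction n with
  | zero =>
    show P (s+(0:ℕ)) ∘L 1 = 1 ∘L P s
    simp [ContinuousLinearMap.one_def]
  | succ n ih =>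
    have h1 : s + ((n+1 : ℕ) : ℤ) = (s + n) + 1 := by push_cast; ring
    rw [evol_succ, h1, ← ContinuousLinearMap.comp_assoc, hinv,
      ContinuousLinearMap.comp_assoc, ih, ContinuousLinearMap.comp_assoc]

lemma evol_mapsTo (hinv : ∀ t, P (t + 1) ∘L A t = A t ∘L P t) (n : ℕ) (s : ℤ)
    {x : E d} (hx : x ∈ LinearMap.ker (P s : (E d) →ₗ[ℝ] (E d))) :
    evol A n s x ∈ LinearMap.ker (P (s + n) : (E d) →ₗ[ℝ] (E d)) := by
  rw [LinearMap.mem_ker, ContinuousLinearMap.coe_coe] at hx ⊢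
  have h := congrArg (fun f : (E d) →L[ℝ] (E d) => f x) (evol_inv hinv n s)
  simp only [ContinuousLinearMap.comp_apply] at h
  rw [h, hx, map_zero]

lemma evol_injOn (hinv : ∀ t, P (t + 1) ∘L A t = A t ∘L P t)
    (hbij : ∀ t, Set.BijOn (A t) (LinearMap.ker (P t : (E d) →ₗ[ℝ] (E d)) : Set (E d))
      (LinearMap.ker (P (t+1) : (E d) →ₗ[ℝ] (E d)) : Set (E d))) (n : ℕ) (s : ℤ) :
    Set.InjOn (evol A n s) (LinearMap.ker (P s : (E d) →ₗ[ℝ] (E d)) : Set (E d)) := by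
  induction n with
  | zero => intro x _ y _ h; simpa [evol] using h
  | succ n ih =>
    intro x hx y hy h
    rw [evol_succ] at h
    simp only [ContinuousLinearMap.comp_apply] at h
    exact ih hx hy ((hbij (s+n)).injOn (evol_mapsTo hinv n s hx)
      (evol_mapsTo hinv n s hy) h)

lemma evol_cocycle (A : ℤ → ((E d) →L[ℝ] (E d))) (m n : ℕ) (s : ℤ) :
    evol A m (s + n) ∘L evol A n s = evol A (m + n) s := by
  induction m with
  | zero =>
    show (1 : (E d) →L[ℝ] (E d)) ∘L evol A n s = _
    simp [ContinuousLinearMap.one_def]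
  | succ m ih =>
    have h1 : (m + 1) + n = (m + n) + 1 := by omega
    have h2 : (s + (n:ℤ)) + (m:ℤ) = s + ((m + n : ℕ) : ℤ) := by push_cast; ring
    rw [h1, evol_succ, evol_succ, ContinuousLinearMap.comp_assoc, ih, h2]

/-- `Ψ` shifts forward along `A`. -/
lemma psi_shift (hinv : ∀ t, P (t + 1) ∘L A t = A t ∘L P t)
    (hbij : ∀ t, Set.BijOn (A t) (LinearMap.ker (P t : (E d) →ₗ[ℝ] (E d)) : Set (E d))
      (LinearMap.ker (P (t+1) : (E d) →ₗ[ℝ] (E d)) : Set (E d)))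
    (hΨ : ∀ s t : ℤ, s ≤ t →
      (∀ x, Ψ s t x ∈ LinearMap.ker (P s : (E d) →ₗ[ℝ] (E d))) ∧
      (Phi A t s ∘L Ψ s t = 1 - P t) ∧ ‖Ψ s t‖ ≤ K * α ^ (t - s).toNat)
    {t τ : ℤ} (h : t + 1 ≤ τ) (x : E d) :
    A t (Ψ t τ x) = Ψ (t+1) τ x := by
  obtain ⟨n, hn⟩ : ∃ n : ℕ, τ = (t + 1) + n := ⟨(τ - (t+1)).toNat, by omega⟩
  subst hn
  -- both sides lie in ker P (t+1)
  have hker1 : A t (Ψ t ((t+1) + n) x) ∈ LinearMap.ker (P (t+1) : (E d) →ₗ[ℝ] (E d)) :=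
    (hbij t).mapsTo ((hΨ t ((t+1)+n) (by omega)).1 x)
  have hker2 : Ψ (t+1) ((t+1) + n) x ∈ LinearMap.ker (P (t+1) : (E d) →ₗ[ℝ] (E d)) :=
    (hΨ (t+1) ((t+1)+n) (by omega)).1 x
  -- apply evol A n (t+1) to both sides and compare
  apply evol_injOn hinv hbij n (t+1) hker1 hker2
  -- evol A n (t+1) (A t y) = evol A (n+1) t y
  have hco : evol A n (t + 1) ∘L evol A 1 t = evol A (n + 1) t := by
    have h2 : t + ((1:ℕ):ℤ) = t + 1 := by norm_num
    rw [← evol_cocycle A n 1 t, h2]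
  have he1 : evol A 1 t = A t := by
    show A (t + (0:ℕ)) ∘L 1 = A t
    simp [ContinuousLinearMap.one_def]
  have key1 : evol A n (t+1) (A t (Ψ t ((t+1)+n) x)) = (1 - P ((t+1)+n)) x := by
    have := congrArg (fun f : (E d) →L[ℝ] (E d) => f (Ψ t ((t+1)+n) x)) hco
    simp only [ContinuousLinearMap.comp_apply, he1] at this
    rw [this]
    have hPhi : Phi A ((t+1)+n) t = evol A (n+1) t := by
      have : (t+1) + (n:ℤ) = t + ((n+1 : ℕ) : ℤ) := by push_cast; ring
      rw [this, Phi_eq]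
    have := congrArg (fun f : (E d) →L[ℝ] (E d) => f x)
      ((hΨ t ((t+1)+n) (by omega)).2.1)
    simp only [ContinuousLinearMap.comp_apply] at this
    rw [← hPhi]; exact this
  have key2 : evol A n (t+1) (Ψ (t+1) ((t+1)+n) x) = (1 - P ((t+1)+n)) x := by
    have hPhi : Phi A ((t+1)+n) (t+1) = evol A n (t+1) := Phi_eq A (t+1) n
    have := congrArg (fun f : (E d) →L[ℝ] (E d) => f x)
      ((hΨ (t+1) ((t+1)+n) (by omega)).2.1)
    simp only [ContinuousLinearMap.comp_apply] at this
    rw [← hPhi]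
    exact this
  rw [key1, key2]


/-- The Green's function sum applied to a forcing sequence `g`. -/
def GSum (A P : ℤ → ((E d) →L[ℝ] (E d))) (Ψ : ℤ → ℤ → ((E d) →L[ℝ] (E d)))
    (g : ℤ → E d) (t : ℤ) : E d :=
  (∑' n : ℕ, (Phi A t (t - n) ∘L P (t - n)) (g (t - 1 - n))) -
  ∑' n : ℕ, Ψ t (t + 1 + n) (g (t + n))

section Bounds

variable (hK : 1 ≤ K) (hα0 : 0 < α) (hα1 : α < 1)
  (hb1 : ∀ s t : ℤ, s ≤ t → ‖Phi A t s ∘L P s‖ ≤ K * α ^ (t - s).toNat)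
  (hΨn : ∀ s t : ℤ, s ≤ t → ‖Ψ s t‖ ≤ K * α ^ (t - s).toNat)
  {g : ℤ → E d} {C : ℝ} (hg : ∀ σ, ‖g σ‖ ≤ C)

include hK hα0 hb1 hg in
lemma norm_term1 (t : ℤ) (n : ℕ) :
    ‖(Phi A t (t - n) ∘L P (t - n)) (g (t - 1 - n))‖ ≤ (K * C) * α ^ n := by
  have h1 : ‖Phi A t (t - n) ∘L P (t - n)‖ ≤ K * α ^ n := by
    have h := hb1 (t - n) t (by omega)
    have he : (t - (t - (n:ℤ))).toNat = n := by omega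
    rwa [he] at h
  calc ‖(Phi A t (t - n) ∘L P (t - n)) (g (t - 1 - n))‖
      ≤ ‖Phi A t (t - n) ∘L P (t - n)‖ * ‖g (t - 1 - n)‖ :=
        ContinuousLinearMap.le_opNorm _ _
    _ ≤ (K * α ^ n) * C := by
        have hC0 : 0 ≤ C := le_trans (norm_nonneg _) (hg 0)
        apply mul_le_mul h1 (hg _) (norm_nonneg _)
        have := pow_nonneg hα0.le n
        nlinarith
    _ = (K * C) * α ^ n := by ring

include hK hα0 hΨn hg in
lemma norm_term2 (t : ℤ) (n : ℕ) :
    ‖Ψ t (t + 1 + n) (g (t + n))‖ ≤ ((K * C) * α) * α ^ n := by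
  have h1 : ‖Ψ t (t + 1 + n)‖ ≤ K * α ^ (n + 1) := by
    have := hΨn t (t + 1 + n) (by omega)
    have he : (t + 1 + (n:ℤ) - t).toNat = n + 1 := by omega
    rwa [he] at this
  calc ‖Ψ t (t + 1 + n) (g (t + n))‖
      ≤ ‖Ψ t (t + 1 + n)‖ * ‖g (t + n)‖ := ContinuousLinearMap.le_opNorm _ _
    _ ≤ (K * α ^ (n + 1)) * C := by
        have hC0 : 0 ≤ C := le_trans (norm_nonneg _) (hg 0)
        apply mul_le_mul h1 (hg _) (norm_nonneg _)
        have := pow_nonneg hα0.le (n+1)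
        nlinarith
    _ = ((K * C) * α) * α ^ n := by ring

include hα0 hα1 in
lemma summable_geom (c : ℝ) : Summable (fun n : ℕ => c * α ^ n) :=
  (summable_geometric_of_lt_one hα0.le hα1).mul_left c

include hK hα0 hα1 hb1 hg in
lemma summable1 (t : ℤ) :
    Summable (fun n : ℕ => (Phi A t (t - n) ∘L P (t - n)) (g (t - 1 - n))) :=
  Summable.of_norm_bounded (summable_geom hα0 hα1 (K * C))
    (norm_term1 hK hα0 hb1 hg t)

include hK hα0 hα1 hΨn hg in
lemma summable2 (t : ℤ) :
    Summable (fun n : ℕ => Ψ t (t + 1 + n) (g (t + n))) :=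
  Summable.of_norm_bounded (summable_geom hα0 hα1 ((K * C) * α))
    (norm_term2 hK hα0 hΨn hg t)

include hK hα0 hα1 hb1 hΨn hg in
lemma GSum_norm (t : ℤ) : ‖GSum A P Ψ g t‖ ≤ K * (1 + α) / (1 - α) * C := by
  have h1α : (0:ℝ) < 1 - α := by linarith
  have hS1 : ‖∑' n : ℕ, (Phi A t (t - n) ∘L P (t - n)) (g (t - 1 - n))‖
      ≤ (K * C) * (1 - α)⁻¹ := by
    calc ‖∑' n : ℕ, (Phi A t (t - n) ∘L P (t - n)) (g (t - 1 - n))‖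
        ≤ ∑' n : ℕ, (K * C) * α ^ n :=
          tsum_of_norm_bounded ((summable_geom hα0 hα1 (K * C)).hasSum)
            (norm_term1 hK hα0 hb1 hg t)
      _ = (K * C) * (1 - α)⁻¹ := by
          rw [tsum_mul_left, tsum_geometric_of_lt_one hα0.le hα1]
  have hS2 : ‖∑' n : ℕ, Ψ t (t + 1 + n) (g (t + n))‖
      ≤ ((K * C) * α) * (1 - α)⁻¹ := by
    calc ‖∑' n : ℕ, Ψ t (t + 1 + n) (g (t + n))‖
        ≤ ∑' n : ℕ, ((K * C) * α) * α ^ n :=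
          tsum_of_norm_bounded ((summable_geom hα0 hα1 ((K * C) * α)).hasSum)
            (norm_term2 hK hα0 hΨn hg t)
      _ = ((K * C) * α) * (1 - α)⁻¹ := by
          rw [tsum_mul_left, tsum_geometric_of_lt_one hα0.le hα1]
  have := norm_sub_le (∑' n : ℕ, (Phi A t (t - n) ∘L P (t - n)) (g (t - 1 - n)))
    (∑' n : ℕ, Ψ t (t + 1 + n) (g (t + n)))
  have heq : K * (1 + α) / (1 - α) * C
      = (K * C) * (1 - α)⁻¹ + ((K * C) * α) * (1 - α)⁻¹ := by
    field_simp
  rw [GSum]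
  rw [heq]
  linarith

include hK hα0 hα1 hb1 hΨn hg in
lemma GSum_sub {g' : ℤ → E d} {C' : ℝ} (hg' : ∀ σ, ‖g' σ‖ ≤ C') (t : ℤ) :
    GSum A P Ψ g t - GSum A P Ψ g' t = GSum A P Ψ (fun σ => g σ - g' σ) t := by
  unfold GSum
  have s1 := summable1 hK hα0 hα1 hb1 hg t
  have s1' := summable1 hK hα0 hα1 hb1 hg' t
  have s2 := summable2 hK hα0 hα1 hΨn hg t
  have s2' := summable2 hK hα0 hα1 hΨn hg' t
  have h : ∀ X Y X' Y' : E d, (X - Y) - (X' - Y') = (X - X') - (Y - Y') := by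
    intros; abel
  rw [h, ← Summable.tsum_sub s1 s1', ← Summable.tsum_sub s2 s2']
  congr 1
  · exact tsum_congr fun n => (map_sub _ _ _).symm
  · exact tsum_congr fun n => (map_sub _ _ _).symm

include hK hα0 hα1 hb1 hΨn hg in
lemma GSum_rec (hinv : ∀ t, P (t + 1) ∘L A t = A t ∘L P t)
    (hbij : ∀ t, Set.BijOn (A t) (LinearMap.ker (P t : (E d) →ₗ[ℝ] (E d)) : Set (E d))
      (LinearMap.ker (P (t+1) : (E d) →ₗ[ℝ] (E d)) : Set (E d)))
    (hΨ : ∀ s t : ℤ, s ≤ t →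
      (∀ x, Ψ s t x ∈ LinearMap.ker (P s : (E d) →ₗ[ℝ] (E d))) ∧
      (Phi A t s ∘L Ψ s t = 1 - P t) ∧ ‖Ψ s t‖ ≤ K * α ^ (t - s).toNat)
    (t : ℤ) :
    GSum A P Ψ g (t + 1) = A t (GSum A P Ψ g t) + g t := by
  have s1 := summable1 hK hα0 hα1 hb1 hg t
  have s2 := summable2 hK hα0 hα1 hΨn hg t
  have s1' := summable1 hK hα0 hα1 hb1 hg (t+1)
  have s2' := summable2 hK hα0 hα1 hΨn hg (t+1)
  have e1 : (∑' n : ℕ, (Phi A (t+1) (t+1 - n) ∘L P (t+1 - n)) (g (t+1-1-n)))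
      = P (t+1) (g t)
        + A t (∑' n : ℕ, (Phi A t (t - n) ∘L P (t - n)) (g (t - 1 - n))) := by
    rw [Summable.tsum_eq_zero_add s1']
    congr 1
    · show (Phi A (t+1) (t+1 - ((0:ℕ):ℤ)) ∘L P (t+1 - ((0:ℕ):ℤ))) (g (t+1-1-((0:ℕ):ℤ)))
        = P (t+1) (g t)
      have h1 : t+1 - ((0:ℕ):ℤ) = t+1 := by omega
      have h2 : t+1-1 - ((0:ℕ):ℤ) = t := by omega
      rw [h1, h2, Phi_self]
      simp [ContinuousLinearMap.one_def]
    · rw [ContinuousLinearMap.map_tsum _ s1]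
      refine tsum_congr fun n => ?_
      have h1 : t+1 - (((n:ℕ)+1 : ℕ):ℤ) = t - n := by push_cast; ring
      have h2 : t+1-1 - (((n:ℕ)+1 : ℕ):ℤ) = t - 1 - n := by push_cast; ring
      rw [h1, h2, Phi_succ A (show t - (n:ℤ) ≤ t by omega)]
      simp [ContinuousLinearMap.comp_apply]
  have e2 : (∑' n : ℕ, Ψ (t+1) (t+1+1+n) (g (t+1+n)))
      = A t (∑' n : ℕ, Ψ t (t+1+n) (g (t+n))) - (g t - P (t+1) (g t)) := by
    rw [ContinuousLinearMap.map_tsum _ s2]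
    have hmap : Summable (fun n : ℕ => A t (Ψ t (t+1+n) (g (t+n)))) := by
      apply Summable.of_norm_bounded
        (summable_geom hα0 hα1 (‖A t‖ * ((K * C) * α)))
      intro n
      calc ‖A t (Ψ t (t+1+n) (g (t+n)))‖ ≤ ‖A t‖ * ‖Ψ t (t+1+n) (g (t+n))‖ :=
            ContinuousLinearMap.le_opNorm _ _
        _ ≤ ‖A t‖ * (((K * C) * α) * α ^ n) := by
            exact mul_le_mul_of_nonneg_left (norm_term2 hK hα0 hΨn hg t n)
              (norm_nonneg _)
        _ = (‖A t‖ * ((K * C) * α)) * α ^ n := by ring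
    rw [Summable.tsum_eq_zero_add hmap]
    have hz : A t (Ψ t (t+1+((0:ℕ):ℤ)) (g (t+((0:ℕ):ℤ)))) = g t - P (t+1) (g t) := by
      have h1 : t+1+((0:ℕ):ℤ) = t+1 := by omega
      have h2 : t+((0:ℕ):ℤ) = t := by omega
      rw [h1, h2]
      have hc : Phi A (t+1) t = A t := by
        rw [Phi_succ A (le_refl t), Phi_self]
        exact ContinuousLinearMap.comp_id _
      have := congrArg (fun f : (E d) →L[ℝ] (E d) => f (g t)) ((hΨ t (t+1) (by omega)).2.1)
      simp only [ContinuousLinearMap.comp_apply, hc] at this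
      rw [this]
      simp [ContinuousLinearMap.one_def]
    rw [hz]
    have htail : (∑' n : ℕ, A t (Ψ t (t+1+(((n:ℕ)+1:ℕ):ℤ)) (g (t+(((n:ℕ)+1:ℕ):ℤ)))))
        = ∑' n : ℕ, Ψ (t+1) (t+1+1+(n:ℤ)) (g (t+1+(n:ℤ))) := by
      refine tsum_congr fun n => ?_
      have h1 : t+1+(((n:ℕ)+1:ℕ):ℤ) = t+1+1+(n:ℤ) := by push_cast; ring
      have h2 : t+(((n:ℕ)+1:ℕ):ℤ) = t+1+(n:ℤ) := by push_cast; ring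
      rw [h1, h2]
      exact psi_shift hinv hbij hΨ (by omega) _
    rw [htail]
    abel
  show (∑' n : ℕ, (Phi A (t+1) (t+1 - n) ∘L P (t+1 - n)) (g (t+1-1-n)))
      - (∑' n : ℕ, Ψ (t+1) (t+1+1+n) (g (t+1+n)))
      = A t (GSum A P Ψ g t) + g t
  rw [e1, e2, GSum, map_sub]
  abel

end Bounds

/-- A bounded entire solution of the homogeneous equation vanishes. -/
lemma homog_zero (hK : 1 ≤ K) (hα0 : 0 < α) (hα1 : α < 1)
    (hinv : ∀ t, P (t + 1) ∘L A t = A t ∘L P t)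
    (hbij : ∀ t, Set.BijOn (A t) (LinearMap.ker (P t : (E d) →ₗ[ℝ] (E d)) : Set (E d))
      (LinearMap.ker (P (t+1) : (E d) →ₗ[ℝ] (E d)) : Set (E d)))
    (hb1 : ∀ s t : ℤ, s ≤ t → ‖Phi A t s ∘L P s‖ ≤ K * α ^ (t - s).toNat)
    (hΨ : ∀ s t : ℤ, s ≤ t →
      (∀ x, Ψ s t x ∈ LinearMap.ker (P s : (E d) →ₗ[ℝ] (E d))) ∧
      (Phi A t s ∘L Ψ s t = 1 - P t) ∧ ‖Ψ s t‖ ≤ K * α ^ (t - s).toNat)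
    {u : ℤ → E d} {M : ℝ} (hu : ∀ t, ‖u t‖ ≤ M)
    (hrec : ∀ t, u (t + 1) = A t (u t)) : ∀ t, u t = 0 := by
  have hlim : Tendsto (fun n : ℕ => (K * M) * α ^ n) atTop (𝓝 0) := by
    have := (tendsto_pow_atTop_nhds_zero_of_lt_one hα0.le hα1).const_mul (K * M)
    simpa using this
  have hev : ∀ (s : ℤ) (n : ℕ), u (s + n) = evol A n s (u s) := by
    intro s n
    induction n with
    | zero => simp; rfl
    | succ n ih =>
      have h1 : s + (((n:ℕ)+1 : ℕ):ℤ) = (s + n) + 1 := by push_cast; ring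
      rw [h1, hrec (s + n), ih, evol_succ]
      rfl
  have hker : ∀ t, P t (u t) = 0 := by
    intro t
    have hb : ∀ n : ℕ, ‖P t (u t)‖ ≤ (K * M) * α ^ n := by
      intro n
      have h1 : u t = evol A n (t - n) (u (t - n)) := by
        have := hev (t - n) n
        rwa [show (t:ℤ) - n + n = t by omega] at this
      have h2 : P t (u t) = (Phi A t (t - n) ∘L P (t - n)) (u (t - n)) := by
        have hP : Phi A t (t - n) = evol A n (t - n) := by
          have := Phi_eq A (t - n) n
          rwa [show (t:ℤ) - n + n = t by omega] at this
        have hcomm := congrArg (fun f : (E d) →L[ℝ] (E d) => f (u (t - n)))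
          (evol_inv hinv n (t - n))
        simp only [ContinuousLinearMap.comp_apply] at hcomm ⊢
        rw [h1, hP]
        have h3 : (t:ℤ) - n + n = t := by omega
        rw [← hcomm]
        rw [h3]
      rw [h2]
      calc ‖(Phi A t (t - n) ∘L P (t - n)) (u (t - n))‖
          ≤ ‖Phi A t (t - n) ∘L P (t - n)‖ * ‖u (t - n)‖ :=
            ContinuousLinearMap.le_opNorm _ _
        _ ≤ (K * α ^ n) * M := by
            have hn : ‖Phi A t (t - n) ∘L P (t - n)‖ ≤ K * α ^ n := by
              have h := hb1 (t - n) t (by omega)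
              have he : (t - (t - (n:ℤ))).toNat = n := by omega
              rwa [he] at h
            have hM0 : 0 ≤ M := le_trans (norm_nonneg _) (hu 0)
            have := pow_nonneg hα0.le n
            apply mul_le_mul hn (hu _) (norm_nonneg _)
            nlinarith
        _ = (K * M) * α ^ n := by ring
    have : ‖P t (u t)‖ ≤ 0 := ge_of_tendsto' hlim hb
    exact norm_le_zero_iff.mp this
  intro s
  have hx : ∀ n : ℕ, u s = Ψ s (s + n) (u (s + n)) := by
    intro n
    have hkerus : u s ∈ LinearMap.ker (P s : (E d) →ₗ[ℝ] (E d)) := LinearMap.mem_ker.mpr (hker s)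
    have hkerΨ : Ψ s (s + n) (u (s + n)) ∈ LinearMap.ker (P s : (E d) →ₗ[ℝ] (E d)) :=
      (hΨ s (s + n) (by omega)).1 _
    apply evol_injOn hinv hbij n s hkerus hkerΨ
    have hL : evol A n s (u s) = u (s + n) := (hev s n).symm
    have hR : evol A n s (Ψ s (s + n) (u (s + n))) = u (s + n) := by
      have hP : Phi A (s + n) s = evol A n s := Phi_eq A s n
      have := congrArg (fun f : (E d) →L[ℝ] (E d) => f (u (s + n)))
        ((hΨ s (s + n) (by omega)).2.1)
      simp only [ContinuousLinearMap.comp_apply] at this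
      rw [← hP, this]
      have hz := hker (s + n)
      simp [ContinuousLinearMap.sub_apply, ContinuousLinearMap.one_apply, hz]
    rw [hL, hR]
  have hb : ∀ n : ℕ, ‖u s‖ ≤ (K * M) * α ^ n := by
    intro n
    rw [hx n]
    calc ‖Ψ s (s + n) (u (s + n))‖ ≤ ‖Ψ s (s + n)‖ * ‖u (s + n)‖ :=
          ContinuousLinearMap.le_opNorm _ _
      _ ≤ (K * α ^ n) * M := by
          have hn : ‖Ψ s (s + n)‖ ≤ K * α ^ n := by
            have h := (hΨ s (s + n) (by omega)).2.2
            have he : (s + (n:ℤ) - s).toNat = n := by omega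
            rwa [he] at h
          have hM0 : 0 ≤ M := le_trans (norm_nonneg _) (hu 0)
          have := pow_nonneg hα0.le n
          apply mul_le_mul hn (hu _) (norm_nonneg _)
          nlinarith
      _ = (K * M) * α ^ n := by ring
  have : ‖u s‖ ≤ 0 := ge_of_tendsto' hlim hb
  exact norm_le_zero_iff.mp this

end Stmt17

open Stmt17

/-- Semilinear equations: if `x_{t+1} = A_t x_t` has an exponential dichotomy on `ℤ`
and the Lipschitz constants of the nonlinearities `r_t` satisfy
`L·K(1+α)/(1−α) < 1`, then `x_{t+1} = A_t x_t + r_t(x_t)` has exactly one bounded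
entire solution. -/
theorem stmt_17 (d : ℕ) (hd : 1 ≤ d)
    (A : ℤ → (EuclideanSpace ℝ (Fin d) →L[ℝ] EuclideanSpace ℝ (Fin d)))
    (P : ℤ → (EuclideanSpace ℝ (Fin d) →L[ℝ] EuclideanSpace ℝ (Fin d)))
    (K α : ℝ) (hED : IsED A P Set.univ K α)
    (r : ℤ → EuclideanSpace ℝ (Fin d) → EuclideanSpace ℝ (Fin d))
    (hbd : ∀ B : Set (EuclideanSpace ℝ (Fin d)), IsBounded B →
      ∃ M : ℝ, ∀ t : ℤ, ∀ x ∈ B, ‖r t x‖ ≤ M)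
    (L : NNReal) (hLip : ∀ t : ℤ, LipschitzWith L (r t))
    (hsmall : (L : ℝ) * (K * (1 + α) / (1 - α)) < 1) :
    ∃! φ : ℤ → EuclideanSpace ℝ (Fin d),
      (∃ M : ℝ, ∀ t : ℤ, ‖φ t‖ ≤ M) ∧
      ∀ t : ℤ, φ (t + 1) = A t (φ t) + r t (φ t) := by
  obtain ⟨hK, hα0, hα1, hPP, hinv0, hbij0, hb10, Ψ, hΨ0⟩ := hED
  have hinv : ∀ t, P (t + 1) ∘L A t = A t ∘L P t := fun t => hinv0 t trivial trivial
  have hbij : ∀ t, Set.BijOn (A t)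
      (LinearMap.ker (P t : (E d) →ₗ[ℝ] (E d)) : Set (EuclideanSpace ℝ (Fin d)))
      (LinearMap.ker (P (t+1) : (E d) →ₗ[ℝ] (E d)) : Set (EuclideanSpace ℝ (Fin d))) :=
    fun t => hbij0 t trivial trivial
  have hb1 : ∀ s t : ℤ, s ≤ t → ‖Phi A t s ∘L P s‖ ≤ K * α ^ (t - s).toNat :=
    fun s t h => hb10 s trivial t trivial h
  have hΨ : ∀ s t : ℤ, s ≤ t →
      (∀ x, Ψ s t x ∈ LinearMap.ker (P s : (E d) →ₗ[ℝ] (E d))) ∧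
      (Phi A t s ∘L Ψ s t = 1 - P t) ∧ ‖Ψ s t‖ ≤ K * α ^ (t - s).toNat :=
    fun s t h => hΨ0 s trivial t trivial h
  have hΨn : ∀ s t : ℤ, s ≤ t → ‖Ψ s t‖ ≤ K * α ^ (t - s).toNat :=
    fun s t h => (hΨ s t h).2.2
  obtain ⟨M0, hM0⟩ := hbd {0} Bornology.isBounded_singleton
  have hr0 : ∀ t : ℤ, ‖r t 0‖ ≤ M0 := fun t => hM0 t 0 rfl
  have h1α : (0:ℝ) < 1 - α := by linarith
  have hKpos : (0:ℝ) < K := by linarith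
  -- the fixed point operator on bounded sequences
  set X := BoundedContinuousFunction ℤ (EuclideanSpace ℝ (Fin d)) with hX
  have hgb : ∀ (φ : X) (σ : ℤ), ‖r σ (φ σ)‖ ≤ (L:ℝ) * ‖φ‖ + M0 := by
    intro φ σ
    have h1 : ‖r σ (φ σ) - r σ 0‖ ≤ (L:ℝ) * ‖φ σ - 0‖ := by
      have := (hLip σ).dist_le_mul (φ σ) 0
      simpa [dist_eq_norm] using this
    have h2 : ‖φ σ‖ ≤ ‖φ‖ := BoundedContinuousFunction.norm_coe_le_norm φ σ
    have h3 : r σ (φ σ) = (r σ (φ σ) - r σ 0) + r σ 0 := by abel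
    calc ‖r σ (φ σ)‖ = ‖(r σ (φ σ) - r σ 0) + r σ 0‖ := by rw [← h3]
      _ ≤ ‖r σ (φ σ) - r σ 0‖ + ‖r σ 0‖ := norm_add_le _ _
      _ ≤ (L:ℝ) * ‖φ σ‖ + M0 := by
          rw [sub_zero] at h1
          exact add_le_add h1 (hr0 σ)
      _ ≤ (L:ℝ) * ‖φ‖ + M0 := by
          have := mul_le_mul_of_nonneg_left h2 L.coe_nonneg
          linarith
  set T : X → X := fun φ => BoundedContinuousFunction.ofNormedAddCommGroup
    (fun t => GSum A P Ψ (fun σ => r σ (φ σ)) t) continuous_of_discreteTopology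
    (K * (1 + α) / (1 - α) * ((L:ℝ) * ‖φ‖ + M0))
    (fun t => Stmt17.GSum_norm hK hα0 hα1 hb1 hΨn (hgb φ) t) with hT
  have hTapp : ∀ (φ : X) (t : ℤ), T φ t = GSum A P Ψ (fun σ => r σ (φ σ)) t :=
    fun φ t => rfl
  set c : NNReal := ⟨(L:ℝ) * (K * (1 + α) / (1 - α)), by positivity⟩ with hc
  have hcc : (c : ℝ) = (L:ℝ) * (K * (1 + α) / (1 - α)) := rfl
  have hlip : LipschitzWith c T := by
    apply LipschitzWith.of_dist_le_mul
    intro φ ψ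
    have hd0 : 0 ≤ (c:ℝ) * dist φ ψ := mul_nonneg c.coe_nonneg dist_nonneg
    rw [BoundedContinuousFunction.dist_le hd0]
    intro t
    rw [dist_eq_norm]
    have hgd : ∀ σ : ℤ, ‖r σ (φ σ) - r σ (ψ σ)‖ ≤ (L:ℝ) * dist φ ψ := by
      intro σ
      have h1 := (hLip σ).dist_le_mul (φ σ) (ψ σ)
      rw [dist_eq_norm] at h1
      calc ‖r σ (φ σ) - r σ (ψ σ)‖ ≤ (L:ℝ) * dist (φ σ) (ψ σ) := h1
        _ ≤ (L:ℝ) * dist φ ψ := by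
            exact mul_le_mul_of_nonneg_left
              (BoundedContinuousFunction.dist_coe_le_dist σ) L.coe_nonneg
    have hdiff : T φ t - T ψ t = GSum A P Ψ (fun σ => r σ (φ σ) - r σ (ψ σ)) t := by
      rw [hTapp, hTapp]
      exact Stmt17.GSum_sub hK hα0 hα1 hb1 hΨn (hgb φ) (hgb ψ) t
    rw [hdiff]
    calc ‖GSum A P Ψ (fun σ => r σ (φ σ) - r σ (ψ σ)) t‖
        ≤ K * (1 + α) / (1 - α) * ((L:ℝ) * dist φ ψ) :=
          Stmt17.GSum_norm hK hα0 hα1 hb1 hΨn hgd t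
      _ = (c:ℝ) * dist φ ψ := by rw [hcc]; ring
  have hcontr : ContractingWith c T := by
    constructor
    · rw [← NNReal.coe_lt_one, hcc]
      exact hsmall
    · exact hlip
  set φ0 : X := ContractingWith.fixedPoint T hcontr with hφ0
  have hfix : T φ0 = φ0 := hcontr.fixedPoint_isFixedPt
  have hsol : ∀ t : ℤ, φ0 (t + 1) = A t (φ0 t) + r t (φ0 t) := by
    intro t
    conv_lhs => rw [← hfix]
    rw [hTapp, Stmt17.GSum_rec hK hα0 hα1 hb1 hΨn (hgb φ0) hinv hbij hΨ t,
      ← hTapp φ0 t, hfix]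
  refine ⟨fun t => φ0 t, ⟨⟨‖φ0‖, fun t => BoundedContinuousFunction.norm_coe_le_norm φ0 t⟩,
    hsol⟩, ?_⟩
  rintro ψ ⟨⟨M, hM⟩, hψrec⟩
  have hgψ : ∀ σ : ℤ, ‖r σ (ψ σ)‖ ≤ (L:ℝ) * M + M0 := by
    intro σ
    have h1 : ‖r σ (ψ σ) - r σ 0‖ ≤ (L:ℝ) * ‖ψ σ - 0‖ := by
      have := (hLip σ).dist_le_mul (ψ σ) 0
      simpa [dist_eq_norm] using this
    have h3 : r σ (ψ σ) = (r σ (ψ σ) - r σ 0) + r σ 0 := by abel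
    calc ‖r σ (ψ σ)‖ = ‖(r σ (ψ σ) - r σ 0) + r σ 0‖ := by rw [← h3]
      _ ≤ ‖r σ (ψ σ) - r σ 0‖ + ‖r σ 0‖ := norm_add_le _ _
      _ ≤ (L:ℝ) * ‖ψ σ‖ + M0 := by
          rw [sub_zero] at h1
          exact add_le_add h1 (hr0 σ)
      _ ≤ (L:ℝ) * M + M0 := by
          have := mul_le_mul_of_nonneg_left (hM σ) L.coe_nonneg
          linarith
  have hu : ∀ t : ℤ, ψ t - GSum A P Ψ (fun σ => r σ (ψ σ)) t = 0 := by
    apply Stmt17.homog_zero hK hα0 hα1 hinv hbij hb1 hΨ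
      (M := M + K * (1 + α) / (1 - α) * ((L:ℝ) * M + M0))
    · intro t
      calc ‖ψ t - GSum A P Ψ (fun σ => r σ (ψ σ)) t‖
          ≤ ‖ψ t‖ + ‖GSum A P Ψ (fun σ => r σ (ψ σ)) t‖ := norm_sub_le _ _
        _ ≤ M + K * (1 + α) / (1 - α) * ((L:ℝ) * M + M0) :=
            add_le_add (hM t) (Stmt17.GSum_norm hK hα0 hα1 hb1 hΨn hgψ t)
    · intro t
      rw [hψrec t, Stmt17.GSum_rec hK hα0 hα1 hb1 hΨn hgψ hinv hbij hΨ t, map_sub]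
      abel
  have hψeq : ∀ t : ℤ, ψ t = GSum A P Ψ (fun σ => r σ (ψ σ)) t :=
    fun t => sub_eq_zero.mp (hu t)
  set ψb : X := BoundedContinuousFunction.ofNormedAddCommGroup ψ
    continuous_of_discreteTopology M hM with hψb
  have hψbapp : ∀ t : ℤ, ψb t = ψ t := fun t => rfl
  have hfixψ : Function.IsFixedPt T ψb := by
    apply BoundedContinuousFunction.ext
    intro t
    rw [hTapp]
    show GSum A P Ψ (fun σ => r σ (ψb σ)) t = ψb t
    have : (fun σ => r σ (ψb σ)) = fun σ => r σ (ψ σ) := rfl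
    rw [this, hψbapp]
    exact (hψeq t).symm
  have huniq : ψb = φ0 := hcontr.fixedPoint_unique hfixψ
  funext t
  calc ψ t = ψb t := rfl
    _ = φ0 t := by rw [huniq]
end
end
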